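/- arXiv:1802.05066 — 5 statements merged into one kernel-verified Lean document; each statement's English description precedes it below -/
import Mathlib

section
/- For any integer n ≥ 1 and any real numbers x_0, ..., x_n with sum zero, one has ∑_{0 ≤ i,j ≤ n} x_i x_j log(1 + |i - j|) ≤ 0, with equality only when all x_i are zero. -/
/-! Frullani's integral `log (1 + m) = ∫₀¹ (1 - r ^ m) / (-log r) dr` writes `log (1 + |i - j|)`
as a superposition of the kernels `1 - r ^ |i - j|`. When `∑ xᵢ = 0` the constant part drops out
and the form becomes `-∫₀¹ Q(r) / (-log r) dr`, where `Q(r) = ∑ xᵢ xⱼ r ^ |i - j|` is the quadratic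
form of the Kac–Murdock–Szegő matrix. With `Aₖ = ∑_{i ≤ k} xᵢ r ^ (k - i)` one has
`Q(r) = Aₙ² + (1 - r²) ∑_{k < n} Aₖ²`, so `Q(r) ≥ 0`, with equality for some `r ∈ (0, 1)` only if
all `Aₖ`, hence all `xₖ`, vanish. -/

open Finset MeasureTheory Real Set

theorem integral_exp_const_mul {c : ℝ} (hc : c ≠ 0) (a b : ℝ) :
    ∫ s in a..b, exp (c * s) = (exp (c * b) - exp (c * a)) / c := by
  rw [intervalIntegral.integral_comp_mul_left (fun s => exp s) hc, integral_exp, smul_eq_mul,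
    inv_mul_eq_div]

theorem integral_one_div_add_one {m : ℝ} (hm : -1 < m) :
    ∫ s in (0 : ℝ)..m, 1 / (s + 1) = log (1 + m) := by
  rw [intervalIntegral.integral_comp_add_right (fun s => 1 / s),
    integral_one_div_of_pos (by norm_num) (by linarith), zero_add, div_one, add_comm]

theorem setIntegral_exp_log_mul_Ioo_zero_natCast {r : ℝ} (hr0 : 0 < r) (hr1 : r < 1) (m : ℕ) :
    ∫ s in Ioo 0 (m : ℝ), exp (log r * s) = (1 - r ^ m) / (-log r) := by
  rw [← integral_Ioc_eq_integral_Ioo, ← intervalIntegral.integral_of_le m.cast_nonneg,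
    integral_exp_const_mul (log_neg hr0 hr1).ne, mul_zero, exp_zero, mul_comm, exp_nat_mul,
    exp_log hr0, ← neg_div_neg_eq, neg_sub]

theorem setIntegral_exp_log_mul_Ioo_zero_one {s : ℝ} (hs : -1 < s) :
    ∫ r in Ioo (0 : ℝ) 1, exp (log r * s) = 1 / (s + 1) := by
  rw [setIntegral_congr_fun measurableSet_Ioo fun r hr => (rpow_def_of_pos hr.1 s).symm,
    ← integral_Ioc_eq_integral_Ioo, ← intervalIntegral.integral_of_le zero_le_one,
    integral_rpow (Or.inl hs), one_rpow, zero_rpow (by linarith), sub_zero]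

theorem integrable_exp_log_mul (m : ℝ) :
    Integrable (Function.uncurry fun r s => exp (log r * s))
      ((volume.restrict (Ioo (0 : ℝ) 1)).prod (volume.restrict (Ioo 0 m))) := by
  have hmeas : Measurable (Function.uncurry fun r s : ℝ => exp (log r * s)) :=
    ((measurable_log.comp measurable_fst).mul measurable_snd).exp
  rw [Measure.prod_restrict]
  refine (integrableOn_const (C := (1 : ℝ)) ?_).mono' hmeas.aestronglyMeasurable ?_
  · rw [Measure.prod_prod]
    simp [Real.volume_Ioo]
  filter_upwards [ae_restrict_mem (measurableSet_Ioo.prod measurableSet_Ioo)]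
    with ⟨r, s⟩ ⟨⟨hr0, hr1⟩, hs0, _⟩
  rw [Function.uncurry_apply_pair, Real.norm_of_nonneg (exp_nonneg _), exp_le_one_iff]
  exact mul_nonpos_of_nonpos_of_nonneg (log_nonpos hr0.le hr1.le) hs0.le

theorem integrableOn_one_sub_pow_div_neg_log (m : ℕ) :
    IntegrableOn (fun r => (1 - r ^ m) / (-log r)) (Ioo 0 1) :=
  (integrable_exp_log_mul m).integral_prod_left.congr <| by
    filter_upwards [ae_restrict_mem measurableSet_Ioo] with r hr
    exact setIntegral_exp_log_mul_Ioo_zero_natCast hr.1 hr.2 m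

theorem intervalIntegrable_one_sub_pow_div_neg_log (m : ℕ) :
    IntervalIntegrable (fun r => (1 - r ^ m) / (-log r)) volume 0 1 :=
  (intervalIntegrable_iff_integrableOn_Ioo_of_le zero_le_one).2
    (integrableOn_one_sub_pow_div_neg_log m)

theorem integral_one_sub_pow_div_neg_log (m : ℕ) :
    ∫ r in (0 : ℝ)..1, (1 - r ^ m) / (-log r) = log (1 + m) := by
  have hm : (0 : ℝ) ≤ m := m.cast_nonneg
  rw [intervalIntegral.integral_of_le zero_le_one, integral_Ioc_eq_integral_Ioo]
  calc ∫ r in Ioo 0 1, (1 - r ^ m) / (-log r)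
      = ∫ r in Ioo 0 1, ∫ s in Ioo 0 (m : ℝ), exp (log r * s) :=
        setIntegral_congr_fun measurableSet_Ioo fun r hr =>
          (setIntegral_exp_log_mul_Ioo_zero_natCast hr.1 hr.2 m).symm
    _ = ∫ s in Ioo 0 (m : ℝ), ∫ r in Ioo 0 1, exp (log r * s) :=
        integral_integral_swap (integrable_exp_log_mul m)
    _ = ∫ s in Ioo 0 (m : ℝ), 1 / (s + 1) :=
        setIntegral_congr_fun measurableSet_Ioo fun s hs =>
          setIntegral_exp_log_mul_Ioo_zero_one (by linarith [hs.1])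
    _ = log (1 + m) := by
        rw [← integral_Ioc_eq_integral_Ioo, ← intervalIntegral.integral_of_le hm,
          integral_one_div_add_one (by linarith)]

theorem Nat.cast_dist (i j : ℕ) : (Nat.dist i j : ℝ) = |(i : ℝ) - j| := by
  rcases le_total i j with h | h
  · rw [Nat.dist_eq_sub_of_le h, Nat.cast_sub h, abs_sub_comm,
      abs_of_nonneg (sub_nonneg.2 (Nat.cast_le.2 h))]
  · rw [Nat.dist_eq_sub_of_le_right h, Nat.cast_sub h,
      abs_of_nonneg (sub_nonneg.2 (Nat.cast_le.2 h))]

namespace KacMurdockSzego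

section

variable (x : ℕ → ℝ) (r : ℝ)

noncomputable def discountedSum (k : ℕ) : ℝ := ∑ i ∈ range (k + 1), x i * r ^ (k - i)

noncomputable def quadForm (n : ℕ) : ℝ :=
  ∑ i ∈ range (n + 1), ∑ j ∈ range (n + 1), x i * x j * r ^ Nat.dist i j

theorem discountedSum_zero : discountedSum x r 0 = x 0 := by
  simp [discountedSum]

theorem sum_mul_pow_dist_succ (k : ℕ) :
    ∑ i ∈ range (k + 1), x i * r ^ Nat.dist i (k + 1) = r * discountedSum x r k := by
  rw [discountedSum, mul_sum]
  refine sum_congr rfl fun i hi => ?_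
  rw [Nat.dist_eq_sub_of_le (by simp at hi; omega),
    show k + 1 - i = k - i + 1 by simp at hi; omega, pow_succ]
  ring

theorem discountedSum_succ (k : ℕ) :
    discountedSum x r (k + 1) = r * discountedSum x r k + x (k + 1) := by
  rw [← sum_mul_pow_dist_succ, discountedSum, sum_range_succ, Nat.sub_self, pow_zero, mul_one]
  congr 1
  exact sum_congr rfl fun i hi => by
    rw [Nat.dist_eq_sub_of_le (by simp at hi; omega)]

theorem quadForm_succ (n : ℕ) :
    quadForm x r (n + 1)
      = quadForm x r n + 2 * r * x (n + 1) * discountedSum x r n + x (n + 1) ^ 2 := by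
  have hcol : ∑ i ∈ range (n + 1), x i * x (n + 1) * r ^ Nat.dist i (n + 1)
      = x (n + 1) * (r * discountedSum x r n) := by
    rw [← sum_mul_pow_dist_succ, mul_sum]
    exact sum_congr rfl fun i _ => by ring
  have hrow : ∑ j ∈ range (n + 1), x (n + 1) * x j * r ^ Nat.dist (n + 1) j
      = x (n + 1) * (r * discountedSum x r n) := by
    rw [← sum_mul_pow_dist_succ, mul_sum]
    exact sum_congr rfl fun j _ => by rw [Nat.dist_comm]; ring
  simp only [quadForm, sum_range_succ _ (n + 1), sum_add_distrib, Nat.dist_self, pow_zero, hcol,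
    hrow]
  ring

theorem quadForm_eq (n : ℕ) :
    quadForm x r n
      = discountedSum x r n ^ 2 + (1 - r ^ 2) * ∑ k ∈ range n, discountedSum x r k ^ 2 := by
  induction n with
  | zero => simp [quadForm, discountedSum, sq]
  | succ n ih =>
    rw [quadForm_succ, ih, discountedSum_succ, sum_range_succ]
    ring

variable {x r}

theorem quadForm_nonneg (hr : |r| ≤ 1) (n : ℕ) : 0 ≤ quadForm x r n := by
  have hc : 0 ≤ 1 - r ^ 2 := sub_nonneg.2 ((sq_le_one_iff_abs_le_one r).2 hr)
  rw [quadForm_eq]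
  positivity

theorem discountedSum_eq_zero_of_quadForm_eq_zero (hr : |r| < 1) {n : ℕ}
    (hQ : quadForm x r n = 0) {k : ℕ} (hk : k ≤ n) : discountedSum x r k = 0 := by
  have hc : 0 < 1 - r ^ 2 := sub_pos.2 ((sq_lt_one_iff_abs_lt_one r).2 hr)
  rw [quadForm_eq] at hQ
  have hsum : 0 ≤ ∑ k ∈ range n, discountedSum x r k ^ 2 := by positivity
  rcases hk.lt_or_eq with hk | rfl
  · have h : ∑ k ∈ range n, discountedSum x r k ^ 2 = 0 := by
      nlinarith [sq_nonneg (discountedSum x r n)]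
    exact pow_eq_zero_iff two_ne_zero |>.1 <|
      (sum_eq_zero_iff_of_nonneg fun _ _ => sq_nonneg _).1 h k (mem_range.2 hk)
  · nlinarith [sq_nonneg (discountedSum x r k)]

theorem eq_zero_of_discountedSum_eq_zero {n : ℕ} (h : ∀ k ≤ n, discountedSum x r k = 0) :
    ∀ k ≤ n, x k = 0 := by
  intro k hk
  cases k with
  | zero => rw [← discountedSum_zero x r]; exact h 0 hk
  | succ k =>
    have hsucc := discountedSum_succ x r k
    rw [h k (by omega), h (k + 1) hk] at hsucc
    linarith

theorem quadForm_pos (hr : |r| < 1) {n : ℕ} {k : ℕ} (hk : k ≤ n) (hxk : x k ≠ 0) :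
    0 < quadForm x r n :=
  (quadForm_nonneg hr.le n).lt_of_ne' fun hQ => hxk <|
    eq_zero_of_discountedSum_eq_zero
      (fun _ hj => discountedSum_eq_zero_of_quadForm_eq_zero hr hQ hj) k hk

end

variable {x : ℕ → ℝ} {n : ℕ}

theorem sum_sum_mul_one_sub_pow_dist (hx : ∑ i ∈ range (n + 1), x i = 0) (r : ℝ) :
    ∑ i ∈ range (n + 1), ∑ j ∈ range (n + 1), x i * x j * (1 - r ^ Nat.dist i j)
      = -quadForm x r n := by
  simp only [quadForm, mul_one_sub, sum_sub_distrib, ← mul_sum, ← sum_mul, hx, zero_mul,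
    zero_sub]

theorem quadForm_div_neg_log_eq (hx : ∑ i ∈ range (n + 1), x i = 0) (r : ℝ) :
    quadForm x r n / (-log r)
      = -∑ i ∈ range (n + 1), ∑ j ∈ range (n + 1),
          x i * x j * ((1 - r ^ Nat.dist i j) / (-log r)) := by
  simp only [mul_div_assoc', ← sum_div, sum_sum_mul_one_sub_pow_dist hx, neg_div, neg_neg]

theorem intervalIntegrable_sum_mul_one_sub_pow_div_neg_log (i : ℕ) :
    IntervalIntegrable (fun r => ∑ j ∈ range (n + 1),
      x i * x j * ((1 - r ^ Nat.dist i j) / (-log r))) volume 0 1 := by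
  simpa only [Finset.sum_fn] using IntervalIntegrable.sum (range (n + 1)) fun j _ =>
    (intervalIntegrable_one_sub_pow_div_neg_log (Nat.dist i j)).const_mul (x i * x j)

theorem intervalIntegrable_quadForm_div_neg_log (hx : ∑ i ∈ range (n + 1), x i = 0) :
    IntervalIntegrable (fun r => quadForm x r n / (-log r)) volume 0 1 := by
  simp_rw [quadForm_div_neg_log_eq hx]
  simpa only [Finset.sum_fn, Pi.neg_def] using
    (IntervalIntegrable.sum (range (n + 1)) fun i _ =>
      intervalIntegrable_sum_mul_one_sub_pow_div_neg_log i).neg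

theorem integral_quadForm_div_neg_log (hx : ∑ i ∈ range (n + 1), x i = 0) :
    ∫ r in (0 : ℝ)..1, quadForm x r n / (-log r)
      = -∑ i ∈ range (n + 1), ∑ j ∈ range (n + 1), x i * x j * log (1 + Nat.dist i j) := by
  simp_rw [quadForm_div_neg_log_eq hx]
  rw [intervalIntegral.integral_neg,
    intervalIntegral.integral_finsetSum fun i _ =>
      intervalIntegrable_sum_mul_one_sub_pow_div_neg_log i]
  refine congrArg _ (sum_congr rfl fun i _ => ?_)
  rw [intervalIntegral.integral_finsetSum fun j _ =>
    (intervalIntegrable_one_sub_pow_div_neg_log _).const_mul _]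
  simp only [intervalIntegral.integral_const_mul, integral_one_sub_pow_div_neg_log]

end KacMurdockSzego

open KacMurdockSzego

section

variable {x : ℕ → ℝ} {n : ℕ}

theorem sum_sum_mul_log_one_add_dist_nonpos (hx : ∑ i ∈ range (n + 1), x i = 0) :
    ∑ i ∈ range (n + 1), ∑ j ∈ range (n + 1), x i * x j * log (1 + Nat.dist i j) ≤ 0 := by
  have h := intervalIntegral.integral_nonneg (μ := volume) zero_le_one fun r hr =>
    div_nonneg (quadForm_nonneg (x := x) (abs_le.2 ⟨by linarith [hr.1], hr.2⟩) n)
      (neg_nonneg.2 (log_nonpos hr.1 hr.2))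
  rw [integral_quadForm_div_neg_log hx] at h
  linarith

theorem sum_sum_mul_log_one_add_dist_neg (hx : ∑ i ∈ range (n + 1), x i = 0) {k : ℕ}
    (hk : k ≤ n) (hxk : x k ≠ 0) :
    ∑ i ∈ range (n + 1), ∑ j ∈ range (n + 1), x i * x j * log (1 + Nat.dist i j) < 0 := by
  have h := intervalIntegral.intervalIntegral_pos_of_pos_on
    (intervalIntegrable_quadForm_div_neg_log hx)
    (fun r hr => div_pos (quadForm_pos (abs_lt.2 ⟨by linarith [hr.1], hr.2⟩) hk hxk)
      (neg_pos.2 (log_neg hr.1 hr.2))) zero_lt_one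
  rw [integral_quadForm_div_neg_log hx] at h
  linarith

end

theorem stmt_0_general (n : ℕ) (x : Fin (n + 1) → ℝ)
    (hx : ∑ i, x i = 0) :
    (∑ i, ∑ j, x i * x j * Real.log (1 + |(i.1 : ℝ) - (j.1 : ℝ)|)) ≤ 0 ∧
    ((∑ i, ∑ j, x i * x j * Real.log (1 + |(i.1 : ℝ) - (j.1 : ℝ)|)) = 0 → x = 0) := by
  set X : ℕ → ℝ := fun k => x (Fin.ofNat (n + 1) k)
  have hX : ∑ k ∈ range (n + 1), X k = 0 := by
    simpa [X, ← Fin.sum_univ_eq_sum_range] using hx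
  have hform : ∑ i, ∑ j, x i * x j * log (1 + |(i.1 : ℝ) - (j.1 : ℝ)|)
      = ∑ i ∈ range (n + 1), ∑ j ∈ range (n + 1), X i * X j * log (1 + Nat.dist i j) := by
    simp [X, ← Fin.sum_univ_eq_sum_range, Nat.cast_dist]
  rw [hform]
  refine ⟨sum_sum_mul_log_one_add_dist_nonpos hX, fun h => funext fun i => ?_⟩
  by_contra hi
  exact (sum_sum_mul_log_one_add_dist_neg hX (Nat.lt_succ_iff.1 i.2) (by simpa [X] using hi)).ne h

theorem stmt_0 (n : ℕ) (hn : 1 ≤ n) (x : Fin (n + 1) → ℝ)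
    (hx : ∑ i, x i = 0) :
    (∑ i, ∑ j, x i * x j * Real.log (1 + |(i.1 : ℝ) - (j.1 : ℝ)|)) ≤ 0 ∧
    ((∑ i, ∑ j, x i * x j * Real.log (1 + |(i.1 : ℝ) - (j.1 : ℝ)|)) = 0 → x = 0) :=
  stmt_0_general n x hx
end

section
/- For every integer n ≥ 1, the real symmetric matrix (log(1 + |i - j|))_{0 ≤ i,j ≤ n} has signature (1, n): it has exactly one positive eigenvalue and n negative eigenvalues (counted with multiplicity), and 0 is not an eigenvalue. -/
/-!
For `x` with `∑ xᵢ = 0`, the partial sums `S_k = x_0 + ⋯ + x_{k-1}` satisfy `x_i = S_{i+1} - S_i`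
and `S_0 = S_N = 0`, so Abel summation in both indices turns `xᵀ M x` into `-Sᵀ R S`, where
`R k l = φ(k-l-1) - 2φ(k-l) + φ(k-l+1)` is the Toeplitz matrix of second differences of
`φ m = log (1 + |m|)`. By concavity of `log`, `R` has diagonal `2 log 2` and nonpositive
off-diagonal entries whose row sums telescope to less than `2 log 2` in absolute value. So `R` is
strictly diagonally dominant, hence positive definite, and `M` is negative definite on the
hyperplane `∑ xᵢ = 0`. Two eigenvectors with nonnegative eigenvalues would span a plane meeting
that hyperplane nontrivially, so at most one eigenvalue is `≥ 0`; and one is `> 0` because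
`(e_0 + e_n)ᵀ M (e_0 + e_n) = 2 log (n + 1) > 0`.
-/

open Finset Matrix

namespace Matrix.IsHermitian

variable {ι : Type*} [Fintype ι] [DecidableEq ι] {A : Matrix ι ι ℝ} (hA : A.IsHermitian)

lemma eigenvectorUnitary_mulVec_injective :
    Function.Injective ((hA.eigenvectorUnitary : Matrix ι ι ℝ) *ᵥ ·) := by
  intro c d h
  simpa [mulVec_mulVec] using congrArg (star (hA.eigenvectorUnitary : Matrix ι ι ℝ) *ᵥ ·) h

lemma dotProduct_mulVec_eigenvectorUnitary_mulVec (c : ι → ℝ) :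
    (hA.eigenvectorUnitary *ᵥ c) ⬝ᵥ A *ᵥ (hA.eigenvectorUnitary *ᵥ c) =
      ∑ i, hA.eigenvalues i * c i ^ 2 := by
  have h := hA.conjStarAlgAut_star_eigenvectorUnitary
  rw [Unitary.conjStarAlgAut_star_apply, star_eq_conjTranspose,
    conjTranspose_eq_transpose_of_trivial] at h
  rw [mulVec_mulVec, dotProduct_mulVec, ← vecMul_transpose, vecMul_vecMul, ← Matrix.mul_assoc, h,
    dotProduct]
  refine sum_congr rfl fun i _ ↦ ?_
  simp only [vecMul_diagonal, RCLike.ofReal_real_eq_id, CompTriple.comp_eq]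
  ring

lemma dotProduct_mulVec_eq_sum (x : ι → ℝ) :
    x ⬝ᵥ A *ᵥ x =
      ∑ i, hA.eigenvalues i * (star (hA.eigenvectorUnitary : Matrix ι ι ℝ) *ᵥ x) i ^ 2 := by
  rw [← dotProduct_mulVec_eigenvectorUnitary_mulVec, mulVec_mulVec,
    Unitary.mul_star_self_of_mem hA.eigenvectorUnitary.2, one_mulVec]

section NegOnHyperplane

variable {w : ι → ℝ} (hneg : ∀ x, x ≠ 0 → w ⬝ᵥ x = 0 → x ⬝ᵥ A *ᵥ x < 0)
include hneg

lemma dotProduct_eigenvectorUnitary_mulVec_ne_zero {c : ι → ℝ} (hc : c ≠ 0)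
    (hc_nonneg : ∀ k, c k ≠ 0 → 0 ≤ hA.eigenvalues k) :
    w ⬝ᵥ (hA.eigenvectorUnitary *ᵥ c) ≠ 0 := by
  refine fun hw ↦ (hneg _ ?_ hw).not_ge ?_
  · simpa using hA.eigenvectorUnitary_mulVec_injective.ne hc
  · rw [dotProduct_mulVec_eigenvectorUnitary_mulVec]
    refine sum_nonneg fun k _ ↦ ?_
    by_cases hk : c k = 0
    · simp [hk]
    · exact mul_nonneg (hc_nonneg k hk) (sq_nonneg _)

lemma eq_of_eigenvalues_nonneg {i j : ι} (hi : 0 ≤ hA.eigenvalues i) (hj : 0 ≤ hA.eigenvalues j) :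
    i = j := by
  by_contra hij
  set a := w ⬝ᵥ (hA.eigenvectorUnitary *ᵥ Pi.single i 1)
  set b := w ⬝ᵥ (hA.eigenvectorUnitary *ᵥ Pi.single j 1)
  have ha : a ≠ 0 := by
    refine hA.dotProduct_eigenvectorUnitary_mulVec_ne_zero hneg (by simp) fun k hk ↦ ?_
    obtain rfl : k = i := by by_contra h; simp [h] at hk
    exact hi
  refine hA.dotProduct_eigenvectorUnitary_mulVec_ne_zero hneg
    (c := b • Pi.single i 1 - a • Pi.single j 1) (fun h ↦ ?_) (fun k hk ↦ ?_) ?_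
  · have := congrFun h j
    simp [hij, ha] at this
  · by_cases hki : k = i
    · rwa [hki]
    by_cases hkj : k = j
    · rwa [hkj]
    simp [hki, hkj] at hk
  · simp only [mulVec_sub, mulVec_smul, dotProduct_sub, dotProduct_smul, smul_eq_mul, a, b]
    ring

end NegOnHyperplane

lemma exists_eigenvalues_pos {v : ι → ℝ} (hv : 0 < v ⬝ᵥ A *ᵥ v) : ∃ i, 0 < hA.eigenvalues i := by
  by_contra! h
  rw [hA.dotProduct_mulVec_eq_sum] at hv
  exact hv.not_ge <| sum_nonpos fun i _ ↦ mul_nonpos_of_nonpos_of_nonneg (h i) (sq_nonneg _)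

theorem signature_of_neg_on_hyperplane {w v : ι → ℝ}
    (hneg : ∀ x, x ≠ 0 → w ⬝ᵥ x = 0 → x ⬝ᵥ A *ᵥ x < 0) (hv : 0 < v ⬝ᵥ A *ᵥ v) :
    #{i | 0 < hA.eigenvalues i} = 1 ∧ #{i | hA.eigenvalues i < 0} = Fintype.card ι - 1 ∧
      ∀ i, hA.eigenvalues i ≠ 0 := by
  obtain ⟨i₀, hi₀⟩ := hA.exists_eigenvalues_pos hv
  have hneg_of_ne : ∀ i, i ≠ i₀ → hA.eigenvalues i < 0 := fun i hi ↦
    not_le.mp fun h ↦ hi (hA.eq_of_eigenvalues_nonneg hneg h hi₀.le)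
  have hpos_iff : ∀ i, 0 < hA.eigenvalues i ↔ i = i₀ := fun i ↦
    ⟨fun h ↦ by_contra fun hi ↦ (hneg_of_ne i hi).not_gt h, by rintro rfl; exact hi₀⟩
  have hneg_iff : ∀ i, hA.eigenvalues i < 0 ↔ i ≠ i₀ := fun i ↦
    ⟨fun h hi ↦ ((hpos_iff i).mpr hi).not_gt h, hneg_of_ne i⟩
  refine ⟨?_, ?_, fun i h ↦ ?_⟩
  · simp [hpos_iff, filter_eq']
  · simp [hneg_iff, filter_ne']
  · rcases eq_or_ne i i₀ with rfl | hi
    · exact hi₀.ne' h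
    · exact (hneg_of_ne i hi).ne h

end Matrix.IsHermitian

lemma sum_sum_mul_mul_pos_of_diagDominant {ι : Type*} [DecidableEq ι] (s : Finset ι)
    (R : ι → ι → ℝ) (hR : ∀ k l, R k l = R l k) (hdom : ∀ k ∈ s, ∑ l ∈ s.erase k, |R k l| < R k k)
    {S : ι → ℝ} (hS : ∃ k ∈ s, S k ≠ 0) :
    0 < ∑ k ∈ s, ∑ l ∈ s, S k * S l * R k l := by
  have hdiag : ∀ k ∈ s, 0 < R k k := fun k hk ↦
    (sum_nonneg fun _ _ ↦ abs_nonneg _).trans_lt (hdom k hk)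
  -- On the diagonal `S k ^ 2 * R k k = 2 * R k k * S k ^ 2 - |R k k| * S k ^ 2`, so one AM-GM
  -- bound covers all pairs.
  have hterm : ∀ k ∈ s, ∀ l ∈ s, (if k = l then 2 * R k k * S k ^ 2 else 0) -
      |R k l| * (S k ^ 2 + S l ^ 2) / 2 ≤ S k * S l * R k l := by
    intro k hk l _
    split_ifs with hkl
    · subst hkl
      rw [abs_of_pos (hdiag k hk)]
      linarith
    · rcases abs_cases (R k l) with ⟨h, hnonneg⟩ | ⟨h, hneg⟩ <;> rw [h]
      · nlinarith [mul_nonneg hnonneg (sq_nonneg (S k + S l))]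
      · nlinarith [mul_nonneg (neg_nonneg.mpr hneg.le) (sq_nonneg (S k - S l))]
  have hsymm : ∑ k ∈ s, ∑ l ∈ s, |R k l| * S l ^ 2 = ∑ k ∈ s, ∑ l ∈ s, |R k l| * S k ^ 2 := by
    rw [sum_comm]
    simp_rw [hR]
  have hrow : ∀ k ∈ s, 0 ≤ (R k k - ∑ l ∈ s.erase k, |R k l|) * S k ^ 2 := fun k hk ↦
    mul_nonneg (sub_nonneg.mpr (hdom k hk).le) (sq_nonneg _)
  have hrowsum : ∀ k ∈ s, ∑ l ∈ s, |R k l| = R k k + ∑ l ∈ s.erase k, |R k l| := fun k hk ↦ by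
    rw [← add_sum_erase s _ hk, abs_of_pos (hdiag k hk)]
  obtain ⟨k₀, hk₀, hSk₀⟩ := hS
  calc 0 < ∑ k ∈ s, (R k k - ∑ l ∈ s.erase k, |R k l|) * S k ^ 2 :=
        sum_pos' hrow ⟨k₀, hk₀, mul_pos (sub_pos.mpr (hdom k₀ hk₀)) (by positivity)⟩
    _ = ∑ k ∈ s, 2 * R k k * S k ^ 2 - ∑ k ∈ s, ∑ l ∈ s, |R k l| * S k ^ 2 := by
        rw [← sum_sub_distrib]
        refine sum_congr rfl fun k hk ↦ ?_
        rw [← sum_mul, hrowsum k hk]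
        ring
    _ = ∑ k ∈ s, ∑ l ∈ s, ((if k = l then 2 * R k k * S k ^ 2 else 0) -
          |R k l| * (S k ^ 2 + S l ^ 2) / 2) := by
        simp only [sum_sub_distrib, mul_add, add_div, sum_add_distrib, ← sum_div, hsymm,
          sum_ite_eq]
        rw [sum_ite_of_true fun _ h ↦ h]
        ring
    _ ≤ _ := sum_le_sum fun k hk ↦ sum_le_sum fun l hl ↦ hterm k hk l hl

def secondDiff (φ : ℤ → ℝ) (m : ℤ) : ℝ := φ (m - 1) - 2 * φ m + φ (m + 1)

lemma sum_range_sub_mul_eq_sum_mul_sub {N : ℕ} {S : ℕ → ℝ} (h0 : S 0 = 0) (hN : S N = 0)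
    (H : ℤ → ℝ) :
    ∑ i ∈ range N, (S (i + 1) - S i) * H i = ∑ i ∈ range N, S i * (H (i - 1) - H i) := by
  have hshift : ∑ i ∈ range N, S (i + 1) * H i = ∑ i ∈ range N, S i * H (i - 1) := by
    have h := (sum_range_succ' (fun i ↦ S i * H (i - 1)) N).symm.trans
      (sum_range_succ (fun i ↦ S i * H (i - 1)) N)
    simpa [h0, hN] using h
  simp only [sub_mul, mul_sub, sum_sub_distrib, hshift]

lemma sum_sum_sub_mul_sub_mul_eq {N : ℕ} {S : ℕ → ℝ} (h0 : S 0 = 0) (hN : S N = 0)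
    (φ : ℤ → ℝ) :
    ∑ i ∈ range N, ∑ j ∈ range N, (S (i + 1) - S i) * (S (j + 1) - S j) * φ (i - j) =
      -∑ i ∈ range N, ∑ j ∈ range N, S i * S j * secondDiff φ (i - j) := by
  calc _ = ∑ i ∈ range N, ∑ j ∈ range N,
        (S (j + 1) - S j) * ((S (i + 1) - S i) * φ (i - j)) :=
        sum_congr rfl fun i _ ↦ sum_congr rfl fun j _ ↦ by ring
    _ = ∑ i ∈ range N, ∑ j ∈ range N,
        S j * ((S (i + 1) - S i) * φ (i - (j - 1)) - (S (i + 1) - S i) * φ (i - j)) :=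
        sum_congr rfl fun i _ ↦
          sum_range_sub_mul_eq_sum_mul_sub h0 hN fun j ↦ (S (i + 1) - S i) * φ (i - j)
    _ = ∑ j ∈ range N, ∑ i ∈ range N,
        (S (i + 1) - S i) * (S j * (φ (i - (j - 1)) - φ (i - j))) := by
        rw [sum_comm]
        exact sum_congr rfl fun j _ ↦ sum_congr rfl fun i _ ↦ by ring
    _ = ∑ j ∈ range N, ∑ i ∈ range N, S i *
        (S j * (φ (i - 1 - (j - 1)) - φ (i - 1 - j)) - S j * (φ (i - (j - 1)) - φ (i - j))) :=
        sum_congr rfl fun j _ ↦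
          sum_range_sub_mul_eq_sum_mul_sub h0 hN fun i ↦ S j * (φ (i - (j - 1)) - φ (i - j))
    _ = _ := by
        rw [sum_comm, ← sum_neg_distrib]
        refine sum_congr rfl fun i _ ↦ ?_
        rw [← sum_neg_distrib]
        refine sum_congr rfl fun j _ ↦ ?_
        rw [secondDiff, show (i : ℤ) - 1 - (j - 1) = i - j by ring,
          show (i : ℤ) - 1 - j = i - j - 1 by ring, show (i : ℤ) - (j - 1) = i - j + 1 by ring]
        ring

lemma sum_range_secondDiff (φ : ℤ → ℝ) (M : ℕ) :
    ∑ d ∈ range M, secondDiff φ (d + 1) = (φ (M + 1) - φ M) - (φ 1 - φ 0) := by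
  have h := sum_range_sub (fun d : ℕ ↦ φ (d + 1) - φ d) M
  push_cast at h
  rw [← h]
  refine sum_congr rfl fun d _ ↦ ?_
  rw [secondDiff, add_sub_cancel_right, add_assoc, one_add_one_eq_two]
  ring

lemma sum_range_abs_secondDiff_lt {φ : ℤ → ℝ} (hmono : ∀ d : ℕ, φ d < φ (d + 1))
    (hconc : ∀ d : ℕ, secondDiff φ (d + 1) ≤ 0) (M : ℕ) :
    ∑ d ∈ range M, |secondDiff φ (d + 1)| < φ 1 - φ 0 := by
  rw [sum_congr rfl fun d _ ↦ abs_of_nonpos (hconc d), sum_neg_distrib, sum_range_secondDiff]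
  linarith [hmono M]

section Toeplitz

variable {φ : ℤ → ℝ} (heven : ∀ m, φ (-m) = φ m)
include heven

lemma secondDiff_neg (m : ℤ) : secondDiff φ (-m) = secondDiff φ m := by
  rw [secondDiff, secondDiff, heven, show -m - 1 = -(m + 1) by ring,
    show -m + 1 = -(m - 1) by ring, heven, heven]
  ring

lemma secondDiff_zero : secondDiff φ 0 = 2 * (φ 1 - φ 0) := by
  rw [secondDiff, zero_sub, heven, zero_add]
  ring

variable (hmono : ∀ d : ℕ, φ d < φ (d + 1)) (hconc : ∀ d : ℕ, secondDiff φ (d + 1) ≤ 0)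
include hmono hconc

lemma sum_erase_abs_secondDiff_lt {N k : ℕ} (hk : k < N) :
    ∑ l ∈ (range N).erase k, |secondDiff φ (k - l)| < secondDiff φ 0 := by
  have hsplit : (range N).erase k = range k ∪ Ico (k + 1) N := by
    ext l
    simp only [mem_erase, mem_range, mem_union, mem_Ico]
    omega
  have hdisj : Disjoint (range k) (Ico (k + 1) N) :=
    disjoint_left.mpr fun l hl hl' ↦ by simp only [mem_range, mem_Ico] at hl hl'; omega
  have hleft : ∑ l ∈ range k, |secondDiff φ (k - l)| = ∑ d ∈ range k, |secondDiff φ (d + 1)| := by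
    rw [← sum_range_reflect]
    refine sum_congr rfl fun l hl ↦ ?_
    rw [mem_range] at hl
    congr 3
    push_cast [Nat.cast_sub (show l ≤ k - 1 by omega), Nat.cast_sub (show 1 ≤ k by omega)]
    ring
  have hright : ∑ l ∈ Ico (k + 1) N, |secondDiff φ (k - l)| =
      ∑ d ∈ range (N - (k + 1)), |secondDiff φ (d + 1)| := by
    rw [sum_Ico_eq_sum_range]
    refine sum_congr rfl fun d _ ↦ ?_
    rw [← secondDiff_neg heven]
    congr 2
    push_cast
    ring
  rw [hsplit, sum_union hdisj, hleft, hright, secondDiff_zero heven]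
  linarith [sum_range_abs_secondDiff_lt hmono hconc k,
    sum_range_abs_secondDiff_lt hmono hconc (N - (k + 1))]

theorem sum_range_sum_range_mul_mul_neg {N : ℕ} {x : ℕ → ℝ} (hsum : ∑ i ∈ range N, x i = 0)
    (hx : ∃ i < N, x i ≠ 0) :
    ∑ i ∈ range N, ∑ j ∈ range N, x i * x j * φ (i - j) < 0 := by
  set S : ℕ → ℝ := fun k ↦ ∑ i ∈ range k, x i
  have hxS : ∀ i, x i = S (i + 1) - S i := fun i ↦ (sum_range_succ_sub_sum x).symm
  have hS : ∃ k ∈ range N, S k ≠ 0 := by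
    by_contra! hS
    obtain ⟨i, hi, hxi⟩ := hx
    have hSsucc : S (i + 1) = 0 := by
      by_cases h : i + 1 < N
      · exact hS _ (mem_range.mpr h)
      · rw [show i + 1 = N by omega]; exact hsum
    exact hxi (by rw [hxS, hSsucc, hS i (mem_range.mpr hi), sub_zero])
  simp_rw [hxS]
  rw [sum_sum_sub_mul_sub_mul_eq (sum_range_zero x) hsum, neg_neg_iff_pos]
  refine sum_sum_mul_mul_pos_of_diagDominant (range N) (fun k l : ℕ ↦ secondDiff φ (k - l))
    (fun k l ↦ by rw [← neg_sub, secondDiff_neg heven]) (fun k hk ↦ ?_) hS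
  rw [sub_self]
  exact sum_erase_abs_secondDiff_lt heven hmono hconc (mem_range.mp hk)

theorem dotProduct_toeplitz_mulVec_neg {N : ℕ} {x : Fin N → ℝ} (hsum : ∑ i, x i = 0)
    (hx : x ≠ 0) :
    x ⬝ᵥ (of fun i j : Fin N ↦ φ (i - j)) *ᵥ x < 0 := by
  set X : ℕ → ℝ := fun m ↦ if h : m < N then x ⟨m, h⟩ else 0
  have hX : ∀ i : Fin N, X i = x i := fun i ↦ by simp [X]
  have hquad : x ⬝ᵥ (of fun i j : Fin N ↦ φ (i - j)) *ᵥ x =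
      ∑ i ∈ range N, ∑ j ∈ range N, X i * X j * φ (i - j) := by
    simp only [dotProduct, mulVec, of_apply, mul_sum, ← Fin.sum_univ_eq_sum_range, hX]
    exact sum_congr rfl fun i _ ↦ sum_congr rfl fun j _ ↦ by ring
  rw [hquad]
  refine sum_range_sum_range_mul_mul_neg heven hmono hconc ?_ ?_
  · rwa [← Fin.sum_univ_eq_sum_range, sum_congr rfl fun i _ ↦ hX i]
  · obtain ⟨i, hi⟩ := Function.ne_iff.mp hx
    exact ⟨i, i.2, by rwa [hX]⟩

end Toeplitz

noncomputable def logOneAddAbs (m : ℤ) : ℝ := Real.log (1 + |(m : ℝ)|)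

lemma logOneAddAbs_neg (m : ℤ) : logOneAddAbs (-m) = logOneAddAbs m := by
  simp [logOneAddAbs]

lemma logOneAddAbs_natCast (d : ℕ) : logOneAddAbs d = Real.log (d + 1) := by
  simp [logOneAddAbs, add_comm]

lemma logOneAddAbs_natCast_lt_succ (d : ℕ) : logOneAddAbs d < logOneAddAbs (d + 1) := by
  rw [← Nat.cast_succ, logOneAddAbs_natCast, logOneAddAbs_natCast]
  exact Real.log_lt_log (by positivity) (by push_cast; linarith)

lemma secondDiff_logOneAddAbs_natCast_succ_nonpos (d : ℕ) :
    secondDiff logOneAddAbs (d + 1) ≤ 0 := by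
  rw [secondDiff, add_sub_cancel_right, ← Nat.cast_succ, ← Nat.cast_succ, logOneAddAbs_natCast,
    logOneAddAbs_natCast, logOneAddAbs_natCast]
  have h := Real.log_le_log (by positivity)
    (show ((d : ℝ) + 1) * (d + 1 + 1 + 1) ≤ (d + 1 + 1) ^ 2 by nlinarith)
  rw [Real.log_mul (by positivity) (by positivity), Real.log_pow] at h
  push_cast at h ⊢
  linarith

lemma exists_dotProduct_logOneAddAbs_mulVec_pos {n : ℕ} (hn : 1 ≤ n) :
    ∃ v : Fin (n + 1) → ℝ, 0 < v ⬝ᵥ (of fun i j : Fin (n + 1) ↦ logOneAddAbs (i - j)) *ᵥ v := by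
  refine ⟨Pi.single 0 1 + Pi.single (Fin.last n) 1, ?_⟩
  have hn_pos : 0 < logOneAddAbs n := by
    rw [logOneAddAbs_natCast]
    exact Real.log_pos (by norm_cast; omega)
  have h0 : logOneAddAbs 0 = 0 := by simp [logOneAddAbs]
  simp only [mulVec_add, mulVec_single_one, dotProduct_add, add_dotProduct, single_dotProduct,
    col_apply, of_apply, one_mul, Fin.val_zero, Fin.val_last, CharP.cast_eq_zero, sub_self,
    sub_zero, zero_sub, logOneAddAbs_neg, h0]
  linarith

open scoped Classical

theorem stmt_2 (n : ℕ) (hn : 1 ≤ n)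
    (M : Matrix (Fin (n + 1)) (Fin (n + 1)) ℝ)
    (hM : M = Matrix.of fun i j => Real.log (1 + |(i.1 : ℝ) - (j.1 : ℝ)|))
    (hHerm : M.IsHermitian) :
    (Finset.univ.filter fun i => 0 < hHerm.eigenvalues i).card = 1 ∧
    (Finset.univ.filter fun i => hHerm.eigenvalues i < 0).card = n ∧
    ∀ i, hHerm.eigenvalues i ≠ 0 := by
  have hM' : M = of fun i j : Fin (n + 1) ↦ logOneAddAbs (i - j) := by
    rw [hM]
    ext i j
    simp [logOneAddAbs]
  have hneg : ∀ x, x ≠ 0 → 1 ⬝ᵥ x = 0 → x ⬝ᵥ M *ᵥ x < 0 := fun x hx hsum ↦ by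
    rw [hM']
    exact dotProduct_toeplitz_mulVec_neg logOneAddAbs_neg logOneAddAbs_natCast_lt_succ
      secondDiff_logOneAddAbs_natCast_succ_nonpos (one_dotProduct x ▸ hsum) hx
  obtain ⟨v, hv⟩ := exists_dotProduct_logOneAddAbs_mulVec_pos hn
  obtain ⟨hpos, hcard_neg, hzero⟩ := hHerm.signature_of_neg_on_hyperplane hneg (hM' ▸ hv)
  exact ⟨hpos, by simpa using hcard_neg, hzero⟩
end

section
/- Let H : [0,∞) → ℝ be Lebesgue integrable with t ↦ (H(t) - H(0))/t bounded on some interval (0,ε). Then for every s ∈ ℂ with Re(s) ≥ 0, the integral ∫_0^∞ ( H(0) e^{-t}/t - H(t) e^{-st}/(1 - e^{-t}) ) dt converges absolutely, and the resulting function ψ_H(s) is holomorphic on Re(s) > 0 and continuous on Re(s) ≥ 0. -/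
/-!
Write `u t = 1 - e^{-t}`; the elementary inequalities `t⁻¹ ≤ (u t)⁻¹ ≤ 1 + t⁻¹` control
everything. Away from `0` the integrand is bounded by `|H 0| e^{-t} / t + |H t| (1 + t⁻¹)`,
which is integrable on `[δ, ∞)`. Near `0` it splits as
`H 0 (e^{-t} - e^{-st}) / t + H 0 e^{-st} (t⁻¹ - (u t)⁻¹) + (H 0 - H t) e^{-st} / u t`,
and for bounded `s` with `0 ≤ re s` each piece is bounded: the first by the mean value theorem
(`|∂ₛ e^{-st}| ≤ t`), the second by the inequalities above, the third by the hypothesis on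
`(H t - H 0) / t`. This integrable majorant, locally uniform in `s`, gives integrability and
continuity by dominated convergence. On `re s > 0` the `s`-derivative `H t · t · e^{-st} / u t` is
dominated by `|H t| (1 + 2 / re s)`, which gives holomorphy.
-/

open MeasureTheory Set

/-- The integrand of the integral defining `ψ_H(s)`. -/
noncomputable def psiIntegrand (H : ℝ → ℝ) (s : ℂ) (t : ℝ) : ℂ :=
  ((H 0 * Real.exp (-t) / t : ℝ) : ℂ) -
    (H t : ℂ) * Complex.exp (-s * t) / ((1 : ℂ) - (Real.exp (-t) : ℂ))

/-- The function `ψ_H`. -/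
noncomputable def psiH (H : ℝ → ℝ) (s : ℂ) : ℂ :=
  ∫ t in Ioi (0 : ℝ), psiIntegrand H s t

namespace Real

lemma one_sub_exp_neg_pos {t : ℝ} (ht : 0 < t) : 0 < 1 - exp (-t) := by
  linarith [exp_lt_one_iff.mpr (neg_lt_zero.mpr ht)]

lemma inv_le_inv_one_sub_exp_neg {t : ℝ} (ht : 0 < t) : t⁻¹ ≤ (1 - exp (-t))⁻¹ :=
  inv_anti₀ (one_sub_exp_neg_pos ht) (by linarith [one_sub_le_exp_neg t])

lemma inv_one_sub_exp_neg_le {t : ℝ} (ht : 0 < t) : (1 - exp (-t))⁻¹ ≤ 1 + t⁻¹ := by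
  have hu := one_sub_exp_neg_pos ht
  have key : (t + 1) * exp (-t) ≤ 1 := by
    calc (t + 1) * exp (-t) ≤ exp t * exp (-t) := by gcongr; exact add_one_le_exp t
      _ = 1 := by rw [← exp_add, add_neg_cancel, exp_zero]
  rw [inv_le_iff_one_le_mul₀ hu]
  field_simp
  nlinarith

lemma mul_exp_neg_mul_le {a : ℝ} (ha : 0 < a) (t : ℝ) : t * exp (-(a * t)) ≤ a⁻¹ := by
  rw [exp_neg, ← div_eq_mul_inv, div_le_iff₀ (exp_pos _), inv_mul_eq_div, le_div_iff₀ ha]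
  linarith [add_one_le_exp (a * t)]

end Real

namespace Complex

lemma norm_exp_neg_mul_ofReal (s : ℂ) (t : ℝ) :
    ‖exp (-s * t)‖ = Real.exp (-(s.re * t)) := by
  rw [norm_exp]; simp

lemma norm_exp_neg_mul_ofReal_le_one {s : ℂ} (hs : 0 ≤ s.re) {t : ℝ} (ht : 0 ≤ t) :
    ‖exp (-s * t)‖ ≤ 1 := by
  rw [norm_exp_neg_mul_ofReal, Real.exp_le_one_iff, neg_nonpos]
  positivity

lemma norm_exp_neg_mul_ofReal_sub_le {a b : ℂ} (ha : 0 ≤ a.re) (hb : 0 ≤ b.re) {t : ℝ}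
    (ht : 0 ≤ t) : ‖exp (-a * t) - exp (-b * t)‖ ≤ t * ‖a - b‖ := by
  have hderiv : ∀ z ∈ {z : ℂ | 0 ≤ z.re},
      HasDerivWithinAt (fun z : ℂ ↦ exp (-z * t)) (exp (-z * t) * -t) {z | 0 ≤ z.re} z :=
    fun z _ ↦
      (((hasDerivAt_id z).neg.mul_const (t : ℂ)).cexp.congr_deriv (by simp)).hasDerivWithinAt
  refine (convex_halfSpace_re_ge 0).norm_image_sub_le_of_norm_hasDerivWithin_le hderiv
    (fun z hz ↦ ?_) hb ha
  rw [norm_mul, norm_neg, norm_real, Real.norm_of_nonneg ht]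
  exact mul_le_of_le_one_left ht (norm_exp_neg_mul_ofReal_le_one hz ht)

end Complex

section

open Complex

variable {H : ℝ → ℝ}

lemma psiIntegrand_eq (s : ℂ) (t : ℝ) :
    psiIntegrand H s t =
      ((H 0 * Real.exp (-t) / t : ℝ) : ℂ) -
        ((H t * (1 - Real.exp (-t))⁻¹ : ℝ) : ℂ) * exp (-s * t) := by
  unfold psiIntegrand; push_cast; ring

lemma psiIntegrand_eq_add (s : ℂ) (t : ℝ) :
    psiIntegrand H s t =
      ((H 0 / t : ℝ) : ℂ) * ((Real.exp (-t) : ℂ) - exp (-s * t)) +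
      ((H 0 * (t⁻¹ - (1 - Real.exp (-t))⁻¹) : ℝ) : ℂ) * exp (-s * t) +
      (((H 0 - H t) * (1 - Real.exp (-t))⁻¹ : ℝ) : ℂ) * exp (-s * t) := by
  rw [psiIntegrand_eq]; push_cast; ring

lemma norm_psiIntegrand_le {s : ℂ} (hs : 0 ≤ s.re) {t : ℝ} (ht : 0 < t) :
    ‖psiIntegrand H s t‖ ≤ |H 0| * Real.exp (-t) / t + |H t| * (1 + t⁻¹) := by
  have hE := norm_exp_neg_mul_ofReal_le_one hs ht.le
  have hu := Real.inv_one_sub_exp_neg_le ht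
  have hu0 := (Real.one_sub_exp_neg_pos ht).le
  rw [psiIntegrand_eq]
  refine (norm_sub_le _ _).trans (add_le_add ?_ ?_)
  · rw [norm_real, Real.norm_eq_abs, abs_div, abs_mul, abs_of_pos (Real.exp_pos _),
      abs_of_pos ht]
  · rw [norm_mul, norm_real, Real.norm_eq_abs, abs_mul, abs_of_nonneg (inv_nonneg.mpr hu0)]
    calc |H t| * (1 - Real.exp (-t))⁻¹ * ‖exp (-s * t)‖ ≤ |H t| * (1 + t⁻¹) * 1 := by gcongr
      _ = _ := mul_one _

lemma norm_psiIntegrand_le_of_le_one {s : ℂ} (hs : 0 ≤ s.re) {t : ℝ} (ht : 0 < t) (ht1 : t ≤ 1)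
    {C : ℝ} (hC : |(H t - H 0) / t| ≤ C) :
    ‖psiIntegrand H s t‖ ≤ |H 0| * (‖s‖ + 2) + 2 * C := by
  have hE := norm_exp_neg_mul_ofReal_le_one hs ht.le
  have hu0 := (Real.one_sub_exp_neg_pos ht).le
  have hexp : ‖(Real.exp (-t) : ℂ) - exp (-s * t)‖ ≤ t * (1 + ‖s‖) := by
    have h := norm_exp_neg_mul_ofReal_sub_le (a := 1) (by simp) hs ht.le
    rw [neg_one_mul, ← ofReal_neg, ← ofReal_exp] at h
    refine h.trans (mul_le_mul_of_nonneg_left ?_ ht.le)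
    simpa using norm_sub_le (1 : ℂ) s
  have hinv : |t⁻¹ - (1 - Real.exp (-t))⁻¹| ≤ 1 := by
    rw [abs_sub_comm, abs_le]
    constructor <;> linarith [Real.inv_le_inv_one_sub_exp_neg ht, Real.inv_one_sub_exp_neg_le ht]
  have hdiff : |H 0 - H t| * (1 - Real.exp (-t))⁻¹ ≤ 2 * C := by
    have hC0 : 0 ≤ C := (abs_nonneg _).trans hC
    calc |H 0 - H t| * (1 - Real.exp (-t))⁻¹ ≤ |H 0 - H t| * (1 + t⁻¹) := by
          gcongr; exact Real.inv_one_sub_exp_neg_le ht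
      _ = |(H t - H 0) / t| * (t + 1) := by
          rw [abs_div, abs_of_pos ht, abs_sub_comm]; field_simp
      _ ≤ C * 2 := mul_le_mul hC (by linarith) (by linarith) hC0
      _ = 2 * C := mul_comm _ _
  rw [psiIntegrand_eq_add]
  refine norm_add₃_le.trans ?_
  simp only [norm_mul, norm_real, Real.norm_eq_abs, abs_div, abs_of_pos ht,
    abs_of_nonneg (inv_nonneg.mpr hu0)]
  have h1 : |H 0| / t * ‖(Real.exp (-t) : ℂ) - exp (-s * t)‖ ≤ |H 0| * (‖s‖ + 2) - |H 0| := by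
    calc |H 0| / t * ‖(Real.exp (-t) : ℂ) - exp (-s * t)‖ ≤ |H 0| / t * (t * (1 + ‖s‖)) := by
          gcongr
      _ = |H 0| * (‖s‖ + 2) - |H 0| := by field_simp; ring
  have h2 : |H 0| * |t⁻¹ - (1 - Real.exp (-t))⁻¹| * ‖exp (-s * t)‖ ≤ |H 0| :=
    calc _ ≤ |H 0| * 1 * 1 := by gcongr
      _ = |H 0| := by ring
  have h3 := (mul_le_of_le_one_right (by positivity) hE).trans hdiff
  linarith

lemma aestronglyMeasurable_psiIntegrand {μ : Measure ℝ} (hH : AEMeasurable H μ) (s : ℂ) :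
    AEStronglyMeasurable (psiIntegrand H s) μ := by
  unfold psiIntegrand
  exact AEMeasurable.aestronglyMeasurable (by fun_prop)

lemma continuous_psiIntegrand (t : ℝ) : Continuous fun s ↦ psiIntegrand H s t := by
  unfold psiIntegrand
  fun_prop

noncomputable def psiIntegrandDeriv (H : ℝ → ℝ) (s : ℂ) (t : ℝ) : ℂ :=
  ((H t * t * (1 - Real.exp (-t))⁻¹ : ℝ) : ℂ) * Complex.exp (-s * t)

lemma hasDerivAt_psiIntegrand (s : ℂ) (t : ℝ) :
    HasDerivAt (fun z ↦ psiIntegrand H z t) (psiIntegrandDeriv H s t) s := by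
  simp only [psiIntegrand_eq]
  have hexp : HasDerivAt (fun z : ℂ ↦ exp (-z * t)) (exp (-s * t) * -t) s :=
    ((hasDerivAt_id s).neg.mul_const (t : ℂ)).cexp.congr_deriv (by simp)
  refine ((hexp.const_mul _).const_sub _).congr_deriv ?_
  rw [psiIntegrandDeriv]
  push_cast
  ring

lemma aestronglyMeasurable_psiIntegrandDeriv {μ : Measure ℝ} (hH : AEMeasurable H μ) (s : ℂ) :
    AEStronglyMeasurable (psiIntegrandDeriv H s) μ := by
  unfold psiIntegrandDeriv
  exact AEMeasurable.aestronglyMeasurable (by fun_prop)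

lemma norm_psiIntegrandDeriv_le {a : ℝ} (ha : 0 < a) {s : ℂ} (hs : a ≤ s.re) {t : ℝ}
    (ht : 0 < t) : ‖psiIntegrandDeriv H s t‖ ≤ |H t| * (1 + a⁻¹) := by
  have hu0 := (Real.one_sub_exp_neg_pos ht).le
  have hdecay : Real.exp (-(s.re * t)) ≤ Real.exp (-(a * t)) := by gcongr
  have key : t * (1 - Real.exp (-t))⁻¹ * Real.exp (-(s.re * t)) ≤ 1 + a⁻¹ :=
    calc t * (1 - Real.exp (-t))⁻¹ * Real.exp (-(s.re * t))
        ≤ t * (1 + t⁻¹) * Real.exp (-(a * t)) := by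
          gcongr; exact Real.inv_one_sub_exp_neg_le ht
      _ = t * Real.exp (-(a * t)) + Real.exp (-(a * t)) := by field_simp
      _ ≤ a⁻¹ + 1 := add_le_add (Real.mul_exp_neg_mul_le ha t)
          (Real.exp_le_one_iff.mpr (by nlinarith))
      _ = 1 + a⁻¹ := add_comm _ _
  rw [psiIntegrandDeriv, norm_mul, norm_real, norm_exp_neg_mul_ofReal,
    Real.norm_eq_abs, abs_mul, abs_mul, abs_of_pos ht, abs_of_nonneg (inv_nonneg.mpr hu0),
    mul_assoc, mul_assoc]
  gcongr
  rwa [← mul_assoc]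

variable (hH : IntegrableOn H (Ioi 0))
    (hbd : ∃ ε > (0 : ℝ), ∃ C : ℝ, ∀ t ∈ Ioo (0 : ℝ) ε, |(H t - H 0) / t| ≤ C)
include hH hbd

lemma exists_integrableOn_bound_psiIntegrand (R : ℝ) :
    ∃ G : ℝ → ℝ, IntegrableOn G (Ioi 0) ∧
      ∀ s : ℂ, 0 ≤ s.re → ‖s‖ ≤ R → ∀ t ∈ Ioi (0 : ℝ), ‖psiIntegrand H s t‖ ≤ G t := by
  obtain ⟨ε, hε, C, hC⟩ := hbd
  set δ := min (ε / 2) 1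
  have hδ : 0 < δ := lt_min (half_pos hε) one_pos
  refine ⟨(Ioc 0 δ).indicator (fun _ ↦ |H 0| * (R + 2) + 2 * C) +
    fun t ↦ |H 0| * Real.exp (-t) / δ + |H t| * (1 + δ⁻¹), ?_, fun s hs hsR t ht ↦ ?_⟩
  · refine Integrable.add ?_ (Integrable.add ?_ ?_)
    · exact ((integrable_indicator_iff measurableSet_Ioc).mpr
        (integrableOn_const measure_Ioc_lt_top.ne)).integrableOn
    · simpa using ((exp_neg_integrableOn_Ioi 0 one_pos).const_mul |H 0|).div_const δ
    · exact hH.norm.mul_const _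
  have hG : 0 ≤ |H 0| * Real.exp (-t) / δ + |H t| * (1 + δ⁻¹) := by positivity
  simp only [Pi.add_apply]
  rcases le_or_gt t δ with htδ | hδt
  · rw [indicator_of_mem (show t ∈ Ioc 0 δ from ⟨ht, htδ⟩)]
    have hbound := norm_psiIntegrand_le_of_le_one hs ht (htδ.trans (min_le_right _ _))
      (hC t ⟨ht, htδ.trans_lt ((min_le_left _ _).trans_lt (half_lt_self hε))⟩)
    have : |H 0| * (‖s‖ + 2) ≤ |H 0| * (R + 2) := by gcongr
    linarith
  · rw [indicator_of_notMem (fun h ↦ h.2.not_gt hδt), zero_add]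
    refine (norm_psiIntegrand_le hs ht).trans ?_
    gcongr

lemma integrableOn_psiIntegrand {s : ℂ} (hs : 0 ≤ s.re) :
    IntegrableOn (psiIntegrand H s) (Ioi 0) := by
  obtain ⟨G, hG, hbound⟩ := exists_integrableOn_bound_psiIntegrand hH hbd ‖s‖
  refine hG.mono' (aestronglyMeasurable_psiIntegrand hH.aemeasurable s) ?_
  filter_upwards [ae_restrict_mem measurableSet_Ioi] with t ht
  exact hbound s hs le_rfl t ht

lemma continuousOn_psiH : ContinuousOn (psiH H) {s : ℂ | 0 ≤ s.re} := by
  intro s₀ _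
  obtain ⟨G, hG, hbound⟩ := exists_integrableOn_bound_psiIntegrand hH hbd (‖s₀‖ + 1)
  refine continuousWithinAt_of_dominated
    (Filter.Eventually.of_forall (aestronglyMeasurable_psiIntegrand hH.aemeasurable)) ?_ hG
    (Filter.Eventually.of_forall fun t ↦ (continuous_psiIntegrand t).continuousWithinAt)
  filter_upwards [mem_nhdsWithin_of_mem_nhds (Metric.closedBall_mem_nhds s₀ one_pos),
    self_mem_nhdsWithin] with s hsR hs
  filter_upwards [ae_restrict_mem measurableSet_Ioi] with t ht
  exact hbound s hs (norm_le_of_mem_closedBall hsR) t ht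

lemma differentiableOn_psiH : DifferentiableOn ℂ (psiH H) {s : ℂ | 0 < s.re} := by
  intro s₀ hs₀
  have ha : 0 < s₀.re / 2 := half_pos hs₀
  have hre : ∀ s ∈ Metric.ball s₀ (s₀.re / 2), s₀.re / 2 ≤ s.re := fun s hs ↦ by
    have := (abs_re_le_norm (s - s₀)).trans (mem_ball_iff_norm.mp hs).le
    rw [sub_re, abs_le] at this
    linarith
  refine (hasDerivAt_integral_of_dominated_loc_of_deriv_le (Metric.ball_mem_nhds s₀ ha)
    (Filter.Eventually.of_forall (aestronglyMeasurable_psiIntegrand hH.aemeasurable))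
    (integrableOn_psiIntegrand hH hbd hs₀.le)
    (aestronglyMeasurable_psiIntegrandDeriv hH.aemeasurable s₀) ?_
    (hH.norm.mul_const (1 + (s₀.re / 2)⁻¹)) ?_).2.differentiableAt.differentiableWithinAt
  · filter_upwards [ae_restrict_mem measurableSet_Ioi] with t ht s hs
    exact norm_psiIntegrandDeriv_le ha (hre s hs) ht
  · exact Filter.Eventually.of_forall fun t s _ ↦ hasDerivAt_psiIntegrand s t

end

theorem stmt_3 (H : ℝ → ℝ)
    (hInt : IntegrableOn H (Ici 0))
    (hbd : ∃ ε > (0 : ℝ), ∃ C : ℝ, ∀ t ∈ Ioo (0 : ℝ) ε, |(H t - H 0) / t| ≤ C) :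
    (∀ s : ℂ, 0 ≤ s.re → IntegrableOn (psiIntegrand H s) (Ioi 0)) ∧
    DifferentiableOn ℂ (psiH H) {s : ℂ | 0 < s.re} ∧
    ContinuousOn (psiH H) {s : ℂ | 0 ≤ s.re} := by
  have hH : IntegrableOn H (Ioi 0) := hInt.mono_set Ioi_subset_Ici_self
  exact ⟨fun _ ↦ integrableOn_psiIntegrand hH hbd, differentiableOn_psiH hH hbd,
    continuousOn_psiH hH hbd⟩
end

section
/- One has the formal power series identity −(1−z)^{-1} log(1−z) = (1−z)^{-1/2} ∑_{k≥0} 4^{-k} C(2k,k) (ψ(1/2 + k) − ψ(1/2)) z^k, where ψ is the digamma function and C(2k,k) the central binomial coefficient. -/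
/-- The digamma function `ψ = Γ'/Γ` on the reals. -/
noncomputable def digamma (x : ℝ) : ℝ :=
  deriv (fun y => Real.log (Real.Gamma y)) x

/-
With `c k = C(α + k - 1, k)` one has `∑ c k z^k = (1 - z)^(-α)` and
`-log (1 - z) = ∑_{m ≥ 1} z^m / m`, so the coefficients of the product
`(1 - z)^(-α) · (-log (1 - z))` are `∑_{i + m = k} c i / m`.
Since `(1 - z) d/dz` acts on `(1 - z)^(-α)` as multiplication by `α` and sends
`-log (1 - z)` to `1`, these coefficients satisfy the same first-order recursion as
`c k · ∑_{j < k} 1/(α + j)`, which is `c k · (ψ(α + k) - ψ(α))` by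
`ψ(x + 1) = ψ(x) + 1/x`. For `α = 1/2`, `c k = 4^(-k) C(2k, k)`, and multiplying by
`(1 - z)^(-1/2)` gives the theorem.
-/

open Finset

lemma digamma_add_one {x : ℝ} (hx : 0 < x) : digamma (x + 1) = digamma x + x⁻¹ := by
  have differentiableAt_logGamma {y : ℝ} (hy : 0 < y) :
      DifferentiableAt ℝ (fun t => Real.log (Real.Gamma t)) y := by
    have hne : ∀ m : ℕ, y ≠ -m := fun m => by linarith [(m.cast_nonneg : (0 : ℝ) ≤ m)]
    exact (Real.differentiableAt_Gamma hne).log (Real.Gamma_ne_zero hne)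
  unfold digamma
  rw [← deriv_comp_add_const, ← Real.deriv_log x,
    ← deriv_add (differentiableAt_logGamma hx) (Real.differentiableAt_log hx.ne')]
  refine Filter.EventuallyEq.deriv_eq ?_
  filter_upwards [eventually_gt_nhds hx] with y hy
  rw [Real.Gamma_add_one hy.ne', Real.log_mul hy.ne' (Real.Gamma_pos_of_pos hy).ne', add_comm]
  rfl

lemma digamma_add_nat {x : ℝ} (hx : 0 < x) (k : ℕ) :
    digamma (x + k) = digamma x + ∑ j ∈ range k, (x + j)⁻¹ := by
  induction k with
  | zero => simp
  | succ k ih =>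
    rw [Nat.cast_succ, ← add_assoc, digamma_add_one (by positivity), ih, sum_range_succ,
      add_assoc]

lemma Ring.natCast_add_one_mul_choose_succ (α : ℝ) (k : ℕ) :
    ((k : ℝ) + 1) * Ring.choose (α + (k + 1 : ℕ) - 1) (k + 1) =
      (k + α) * Ring.choose (α + k - 1) k := by
  have h := Ring.choose_smul_choose (α + k) (Nat.le_add_left 1 k)
  simp only [Nat.choose_one_right, Ring.choose_one_right, nsmul_eq_mul, Nat.add_sub_cancel] at h
  push_cast at h ⊢
  rw [show α + ((k : ℝ) + 1) - 1 = α + k by ring, h, add_comm α]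

lemma Ring.choose_one_half_add_sub_one (k : ℕ) :
    Ring.choose (1 / 2 + k - 1 : ℝ) k = ((4 : ℝ) ^ k)⁻¹ * (Nat.choose (2 * k) k : ℝ) := by
  induction k with
  | zero => simp
  | succ k ih =>
    refine mul_left_cancel₀ (Nat.cast_add_one_ne_zero k) ?_
    have h := Nat.succ_mul_centralBinom_succ k
    rw [Nat.centralBinom_eq_two_mul_choose, Nat.centralBinom_eq_two_mul_choose] at h
    have h' : ((k : ℝ) + 1) * (Nat.choose (2 * (k + 1)) (k + 1) : ℝ) =
        2 * (2 * k + 1) * (Nat.choose (2 * k) k : ℝ) := by exact_mod_cast h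
    rw [Ring.natCast_add_one_mul_choose_succ, ih, pow_succ, mul_left_comm ((k : ℝ) + 1), h']
    ring

section LogConvolution

variable {α : ℝ} {c : ℕ → ℝ}

/- The weight `(p.2 : ℝ)⁻¹` is `1/m` for the log series, and the junk value
`(0 : ℝ)⁻¹ = 0` is exactly its missing constant term. -/
lemma sum_antidiagonal_mul_inv_succ (hc : ∀ k : ℕ, (k + 1) * c (k + 1) = (k + α) * c k)
    (k : ℕ) :
    (k + 1) * ∑ p ∈ antidiagonal (k + 1), c p.1 * (p.2 : ℝ)⁻¹ =
      (k + α) * ∑ p ∈ antidiagonal k, c p.1 * (p.2 : ℝ)⁻¹ + c k := by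
  have shift_left : ∑ p ∈ antidiagonal (k + 1), (p.1 : ℝ) * c p.1 * (p.2 : ℝ)⁻¹ =
      ∑ p ∈ antidiagonal k, (p.1 + α) * c p.1 * (p.2 : ℝ)⁻¹ := by
    rw [Nat.sum_antidiagonal_succ]
    simp only [Nat.cast_zero, zero_mul, zero_add, Nat.cast_succ, hc]
  have shift_right : ∑ p ∈ antidiagonal (k + 1), c p.1 * ((p.2 : ℝ) * (p.2 : ℝ)⁻¹) =
      ∑ p ∈ antidiagonal k, c p.1 := by
    rw [Nat.sum_antidiagonal_succ']
    simp [Nat.cast_add_one_ne_zero]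
  have only_diag :
      ∑ p ∈ antidiagonal k, c p.1 * (1 - (p.2 : ℝ) * (p.2 : ℝ)⁻¹) = c k := by
    rw [sum_eq_single (k, 0) (fun p hp hne => ?_) (by simp)]
    · simp
    · have : p.2 ≠ 0 := fun h => hne (by ext <;> simp_all)
      simp [this]
  calc (k + 1) * ∑ p ∈ antidiagonal (k + 1), c p.1 * (p.2 : ℝ)⁻¹
      = ∑ p ∈ antidiagonal (k + 1), ((p.1 : ℝ) * c p.1 * (p.2 : ℝ)⁻¹
          + c p.1 * ((p.2 : ℝ) * (p.2 : ℝ)⁻¹)) := by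
        rw [mul_sum]
        refine sum_congr rfl fun p hp => ?_
        have hk : (k : ℝ) + 1 = p.1 + p.2 := by exact_mod_cast (mem_antidiagonal.mp hp).symm
        rw [hk]
        ring
    _ = ∑ p ∈ antidiagonal k, ((p.1 + α) * c p.1 * (p.2 : ℝ)⁻¹
          + c p.1 * ((p.2 : ℝ) * (p.2 : ℝ)⁻¹)
          + c p.1 * (1 - (p.2 : ℝ) * (p.2 : ℝ)⁻¹)) := by
        rw [sum_add_distrib, shift_left, shift_right, ← sum_add_distrib]
        exact sum_congr rfl fun p _ => by ring
    _ = (k + α) * ∑ p ∈ antidiagonal k, c p.1 * (p.2 : ℝ)⁻¹ + c k := by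
        rw [sum_add_distrib, only_diag, mul_sum]
        congr 1
        refine sum_congr rfl fun p hp => ?_
        have hk : (k : ℝ) = p.1 + p.2 := by exact_mod_cast (mem_antidiagonal.mp hp).symm
        rw [hk]
        ring

lemma sum_antidiagonal_mul_inv_eq (hc : ∀ k : ℕ, (k + 1) * c (k + 1) = (k + α) * c k)
    (hα : ∀ j : ℕ, α + j ≠ 0) (k : ℕ) :
    ∑ p ∈ antidiagonal k, c p.1 * (p.2 : ℝ)⁻¹ =
      c k * ∑ j ∈ range k, (α + j)⁻¹ := by
  induction k with
  | zero => simp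
  | succ k ih =>
    refine mul_left_cancel₀ (Nat.cast_add_one_ne_zero k) ?_
    rw [sum_antidiagonal_mul_inv_succ hc, ih, sum_range_succ, ← mul_assoc _ (c (k + 1)), hc]
    field_simp [hα k]
    ring

end LogConvolution

section PowerSeries

variable {z : ℝ}

lemma hasSum_choose_mul_pow (a : ℝ) (hz : |z| < 1) :
    HasSum (fun n : ℕ => Ring.choose (a + n - 1) n * z ^ n) ((1 - z) ^ (-a)) := by
  have hz' : z ∈ Metric.eball (0 : ℝ) 1 := by
    simpa [enorm_eq_nnnorm, ← NNReal.coe_lt_one] using hz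
  have h := (Real.one_div_one_sub_rpow_hasFPowerSeriesOnBall_zero a).hasSum hz'
  simpa [FormalMultilinearSeries.ofScalars_apply_eq, mul_comm,
    Real.rpow_neg (sub_nonneg.mpr (abs_lt.mp hz).2.le)] using h

lemma summable_norm_choose_mul_pow (a : ℝ) (hz : |z| < 1) :
    Summable fun n : ℕ => ‖Ring.choose (a + n - 1) n * z ^ n‖ := by
  have hz' : z ∈ Metric.eball (0 : ℝ) 1 := by
    simpa [enorm_eq_nnnorm, ← NNReal.coe_lt_one] using hz
  have h := Real.one_div_one_sub_rpow_hasFPowerSeriesOnBall_zero a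
  simpa [FormalMultilinearSeries.ofScalars_apply_eq, mul_comm] using
    FormalMultilinearSeries.summable_norm_apply _ (Metric.eball_subset_eball h.r_le hz')

lemma hasSum_inv_mul_pow (hz : |z| < 1) :
    HasSum (fun n : ℕ => (n : ℝ)⁻¹ * z ^ n) (-Real.log (1 - z)) := by
  refine (hasSum_nat_add_iff' 1).mp ?_
  simpa [div_eq_inv_mul] using Real.hasSum_pow_div_log_of_abs_lt_one hz

lemma summable_norm_inv_mul_pow (hz : |z| < 1) :
    Summable fun n : ℕ => ‖(n : ℝ)⁻¹ * z ^ n‖ := by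
  simpa using (hasSum_inv_mul_pow (z := |z|) (by simpa using hz)).summable

end PowerSeries

theorem hasSum_choose_mul_digamma_sub_mul_pow {α : ℝ} (hα : 0 < α) {z : ℝ} (hz : |z| < 1) :
    HasSum (fun k : ℕ => Ring.choose (α + k - 1) k * (digamma (α + k) - digamma α) * z ^ k)
      ((1 - z) ^ (-α) * -Real.log (1 - z)) := by
  have hf := summable_norm_choose_mul_pow α hz
  have hg := summable_norm_inv_mul_pow hz
  have cauchy := (summable_norm_sum_mul_antidiagonal_of_summable_norm hf hg).of_norm.hasSum
  rw [← tsum_mul_tsum_eq_tsum_sum_antidiagonal_of_summable_norm hf hg,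
    (hasSum_choose_mul_pow α hz).tsum_eq, (hasSum_inv_mul_pow hz).tsum_eq] at cauchy
  refine cauchy.congr_fun fun k => ?_
  rw [digamma_add_nat hα, add_sub_cancel_left,
    ← sum_antidiagonal_mul_inv_eq (c := fun k => Ring.choose (α + k - 1) k)
      (Ring.natCast_add_one_mul_choose_succ α) (fun j => by positivity), sum_mul]
  refine sum_congr rfl fun p hp => ?_
  rw [← mem_antidiagonal.mp hp, pow_add]
  ring

theorem stmt_15 (z : ℝ) (hz : |z| < 1) :
    HasSum
      (fun k : ℕ =>
        (1 - z) ^ (-(1/2) : ℝ) * (((4 : ℝ) ^ k)⁻¹ * (Nat.choose (2 * k) k : ℝ) *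
          (digamma (1/2 + k) - digamma (1/2)) * z ^ k))
      (-(1 - z)⁻¹ * Real.log (1 - z)) := by
  have h1z : 0 < 1 - z := by linarith [(abs_lt.mp hz).2]
  have h := (hasSum_choose_mul_digamma_sub_mul_pow one_half_pos hz).mul_left
    ((1 - z) ^ (-(1 / 2) : ℝ))
  rw [← mul_assoc, ← Real.rpow_add h1z, show -(1 / 2 : ℝ) + -(1 / 2) = -1 by norm_num,
    Real.rpow_neg_one, mul_neg, ← neg_mul] at h
  simpa only [Ring.choose_one_half_add_sub_one] using h
end

section
/- For H(t) = e^{-t/2} (so ψ_H(s) = ψ(1/2 + s)), the threshold t_n^H equals ψ(1/2) + h_n for all integers n ≥ 0, where h_n = 1 + 1/2 + ... + 1/n is the n-th harmonic number (h_0 = 0) and ψ(1/2) = −γ − log 4. -/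
open Finset

noncomputable def oddHarmonic (k : ℕ) : ℝ := ∑ m ∈ range k, 2 / (2 * m + 1)

lemma oddHarmonic_succ (k : ℕ) : oddHarmonic (k + 1) = oddHarmonic k + 2 / (2 * k + 1) :=
  sum_range_succ _ _

lemma digamma_half_add_natCast (k : ℕ) :
    digamma (1 / 2 + k) = digamma (1 / 2) + oddHarmonic k := by
  induction k with
  | zero => simp [oddHarmonic]
  | succ k ih =>
    have hk : (0 : ℝ) < 1 / 2 + k := by positivity
    rw [Nat.cast_succ, ← add_assoc, digamma_add_one hk, ih, oddHarmonic_succ]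
    field_simp
    ring

lemma digamma_half_add_abs_sub (i j : ℕ) :
    digamma (1 / 2 + |(i : ℝ) - j|) = digamma (1 / 2) + oddHarmonic (Nat.dist i j) := by
  rw [← digamma_half_add_natCast]
  congr 2
  rcases le_total i j with h | h
  · rw [Nat.dist_eq_sub_of_le h, abs_of_nonpos (by simpa using h), Nat.cast_sub h]; ring
  · rw [Nat.dist_eq_sub_of_le_right h, abs_of_nonneg (by simpa using h), Nat.cast_sub h]

lemma oddHarmonic_dist_succ_left_sub (i j : ℕ) :
    oddHarmonic (Nat.dist (i + 1) j) - oddHarmonic (Nat.dist i j) =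
      2 / (2 * ((i : ℝ) - j) + 1) := by
  rcases le_or_gt j i with h | h
  · rw [Nat.dist_eq_sub_of_le_right h, Nat.dist_eq_sub_of_le_right (h.trans i.le_succ),
      Nat.succ_sub h, oddHarmonic_succ, Nat.cast_sub h]
    ring
  · obtain ⟨k, rfl⟩ := Nat.exists_eq_add_of_lt h
    rw [Nat.dist_eq_sub_of_le (by omega), Nat.dist_eq_sub_of_le (by omega),
      show i + k + 1 - i = k + 1 by omega, show i + k + 1 - (i + 1) = k by omega, oddHarmonic_succ]
    push_cast
    rw [show 2 * ((i : ℝ) - (i + k + 1)) + 1 = -(2 * k + 1) by ring, div_neg]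
    ring

lemma two_mul_natCast_sub_add_one_ne_zero (i j : ℕ) : 2 * ((i : ℝ) - j) + 1 ≠ 0 := by
  have : (2 * ((i : ℤ) - j) + 1 : ℤ) ≠ 0 := by omega
  exact_mod_cast this

section PowerSeries

open PowerSeries

section CommRing

variable {R : Type*} [CommRing R]

lemma coeff_mk_mul_mk (a b : ℕ → R) (m : ℕ) :
    coeff m (mk a * mk b) = ∑ k ∈ range (m + 1), a k * b (m - k) := by
  simp [coeff_mul, Nat.sum_antidiagonal_eq_sum_range_succ (fun i j => a i * b j)]

lemma coeff_X_mul_derivative (f : R⟦X⟧) (m : ℕ) :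
    coeff m (X * d⁄dX R f) = m * coeff m f := by
  cases m with
  | zero => simp
  | succ m => rw [coeff_succ_X_mul, coeff_derivative, mul_comm]; push_cast; ring

lemma coeff_succ_one_sub_X_mul (f : R⟦X⟧) (m : ℕ) :
    coeff (m + 1) ((1 - X) * f) = coeff (m + 1) f - coeff m f := by
  rw [sub_mul, one_mul, map_sub, coeff_succ_X_mul]

lemma coeff_one_sub_X_mul_derivative (f : R⟦X⟧) (m : ℕ) :
    coeff m ((1 - X) * d⁄dX R f) = (m + 1) * coeff (m + 1) f - m * coeff m f := by
  rw [sub_mul, one_mul, map_sub, coeff_X_mul_derivative, coeff_derivative, mul_comm]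

end CommRing

lemma coeff_succ_of_one_sub_X_mul_derivative {K : Type*} [Field K] [CharZero K] {f g : K⟦X⟧}
    (h : (1 - X) * d⁄dX K f = f + g) (m : ℕ) :
    coeff (m + 1) f = coeff m f + coeff m g / (m + 1) := by
  have hm := congrArg (coeff m) h
  rw [coeff_one_sub_X_mul_derivative, map_add] at hm
  have : (m + 1 : K) ≠ 0 := Nat.cast_add_one_ne_zero m
  field_simp
  linear_combination hm

noncomputable def normCentralBinom (j : ℕ) : ℝ := Nat.centralBinom j / 4 ^ j

lemma normCentralBinom_zero : normCentralBinom 0 = 1 := by simp [normCentralBinom]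

lemma normCentralBinom_succ (j : ℕ) :
    (2 * j + 2) * normCentralBinom (j + 1) = (2 * j + 1) * normCentralBinom j := by
  have h : ((j + 1 : ℕ) : ℝ) * Nat.centralBinom (j + 1) = 2 * (2 * j + 1) * Nat.centralBinom j := by
    exact_mod_cast Nat.succ_mul_centralBinom_succ j
  unfold normCentralBinom
  rw [pow_succ]
  push_cast at h
  field_simp
  linear_combination 2 * h

noncomputable def centralBinomSeries : ℝ⟦X⟧ := mk normCentralBinom

local notation "𝒞" => centralBinomSeries

lemma two_mul_one_sub_X_mul_derivative_centralBinomSeries :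
    2 * ((1 - X) * d⁄dX ℝ 𝒞) = 𝒞 := by
  ext m
  rw [← map_ofNat C 2, coeff_C_mul, coeff_one_sub_X_mul_derivative, centralBinomSeries,
    coeff_mk, coeff_mk]
  linear_combination normCentralBinom_succ m

lemma centralBinomSeries_mul_self : 𝒞 * 𝒞 = PowerSeries.mk 1 := by
  have hode : (1 - X) * d⁄dX ℝ (𝒞 * 𝒞) = 𝒞 * 𝒞 + 0 := by
    rw [Derivation.leibniz, smul_eq_mul]
    linear_combination 𝒞 * two_mul_one_sub_X_mul_derivative_centralBinomSeries
  ext m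
  induction m with
  | zero => simp [centralBinomSeries, coeff_mk_mul_mk, normCentralBinom_zero]
  | succ m ih => rw [coeff_succ_of_one_sub_X_mul_derivative hode, ih]; simp

lemma one_sub_X_mul_centralBinomSeries_mul_self : (1 - X) * (𝒞 * 𝒞) = 1 := by
  rw [centralBinomSeries_mul_self, mul_comm, mk_one_mul_one_sub_eq_one]

lemma sum_normCentralBinom_mul (m : ℕ) :
    ∑ k ∈ range (m + 1), normCentralBinom k * normCentralBinom (m - k) = 1 := by
  simpa [centralBinomSeries, coeff_mk_mul_mk] using
    congrArg (coeff m) centralBinomSeries_mul_self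

lemma sum_normCentralBinom_mul_oddHarmonic (m : ℕ) :
    ∑ k ∈ range (m + 1), normCentralBinom k * oddHarmonic k * normCentralBinom (m - k) =
      harmonic m := by
  set L : ℝ⟦X⟧ := mk fun k => normCentralBinom k * oddHarmonic k
  have hL : 2 * ((1 - X) * d⁄dX ℝ L) = L + 2 * 𝒞 := by
    ext k
    rw [← map_ofNat C 2, map_add, coeff_C_mul, coeff_C_mul, coeff_one_sub_X_mul_derivative]
    simp only [L, centralBinomSeries, coeff_mk, oddHarmonic_succ]
    have he : (2 * k + 1 : ℝ) * (2 / (2 * k + 1)) = 2 := mul_div_cancel₀ _ (by positivity)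
    linear_combination (oddHarmonic k + 2 / (2 * k + 1)) * normCentralBinom_succ k
      + normCentralBinom k * he
  have h2 : (2 : ℝ⟦X⟧) ≠ 0 := fun h =>
    two_ne_zero ((map_eq_zero_iff C C_injective).1 ((map_ofNat C 2).trans h))
  have hode : (1 - X) * d⁄dX ℝ (L * 𝒞) = L * 𝒞 + 𝒞 * 𝒞 := by
    refine mul_left_cancel₀ h2 ?_
    rw [Derivation.leibniz, smul_eq_mul, smul_eq_mul]
    linear_combination L * two_mul_one_sub_X_mul_derivative_centralBinomSeries + 𝒞 * hL
  have hcoeff : ∀ m, coeff m (L * 𝒞) = harmonic m := by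
    intro m
    induction m with
    | zero => simp [L, centralBinomSeries, coeff_mk_mul_mk, oddHarmonic]
    | succ m ih =>
      rw [coeff_succ_of_one_sub_X_mul_derivative hode, ih, centralBinomSeries_mul_self,
        harmonic_succ]
      simp
  simpa [L, centralBinomSeries, coeff_mk_mul_mk] using hcoeff m

noncomputable def centralBinomDivSeries (i : ℕ) : ℝ⟦X⟧ :=
  mk fun j => normCentralBinom j / (2 * ((i : ℝ) - j) + 1)

-- The factor `2 (i - m)` vanishes at `m = i`, so `centralBinomDivSeries i * 𝒞` is a polynomial of
-- degree at most `i`.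
lemma coeff_succ_centralBinomDivSeries_mul (i m : ℕ) :
    (2 * ((i : ℝ) - m) - 1) * coeff (m + 1) (centralBinomDivSeries i * 𝒞) =
      2 * ((i : ℝ) - m) * coeff m (centralBinomDivSeries i * 𝒞) := by
  set W := centralBinomDivSeries i
  have hW : C (2 * i + 1 : ℝ) * W - 2 * (X * d⁄dX ℝ W) = 𝒞 := by
    ext j
    rw [← map_ofNat C 2, map_sub, coeff_C_mul, coeff_C_mul, coeff_X_mul_derivative]
    simp only [W, centralBinomDivSeries, centralBinomSeries, coeff_mk]
    have := two_mul_natCast_sub_add_one_ne_zero i j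
    field_simp
    ring
  have hode : (1 - X) * (C (2 * i + 1 : ℝ) * (W * 𝒞) - 2 * (X * d⁄dX ℝ (W * 𝒞))) =
      1 - X * (W * 𝒞) := by
    rw [Derivation.leibniz, smul_eq_mul, smul_eq_mul]
    linear_combination (1 - X) * 𝒞 * hW
      - X * W * two_mul_one_sub_X_mul_derivative_centralBinomSeries
      + one_sub_X_mul_centralBinomSeries_mul_self
  have hm := congrArg (coeff (m + 1)) hode
  rw [coeff_succ_one_sub_X_mul, map_sub, map_sub, map_sub, coeff_succ_X_mul, ← map_ofNat C 2,
    coeff_C_mul, coeff_C_mul, coeff_C_mul, coeff_C_mul, coeff_X_mul_derivative,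
    coeff_X_mul_derivative, coeff_one] at hm
  simp only [Nat.cast_add, Nat.cast_one, Nat.add_eq_zero_iff, one_ne_zero, and_false,
    ↓reduceIte, zero_sub] at hm
  linear_combination hm

lemma coeff_centralBinomDivSeries_mul_eq_zero {i m : ℕ} (him : i < m) :
    coeff m (centralBinomDivSeries i * 𝒞) = 0 := by
  induction m, him using Nat.le_induction with
  | base => simpa using coeff_succ_centralBinomDivSeries_mul i i
  | succ m _ ih =>
    have : 2 * ((i : ℝ) - m) - 1 ≠ 0 := by
      convert two_mul_natCast_sub_add_one_ne_zero i (m + 1) using 1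
      push_cast
      ring
    simpa [ih, this] using coeff_succ_centralBinomDivSeries_mul i m

lemma sum_normCentralBinom_mul_div_eq_zero {i N : ℕ} (hiN : i < N) :
    ∑ j ∈ range (N + 1), normCentralBinom j * normCentralBinom (N - j) / (2 * ((i : ℝ) - j) + 1) =
      0 := by
  rw [← coeff_centralBinomDivSeries_mul_eq_zero hiN, centralBinomDivSeries, centralBinomSeries,
    coeff_mk_mul_mk]
  exact sum_congr rfl fun j _ => (div_mul_eq_mul_div _ _ _).symm

end PowerSeries

lemma sum_oddHarmonic_dist_mul_normCentralBinom {n i : ℕ} (hi : i ≤ n) :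
    ∑ j ∈ range (n + 1),
      oddHarmonic (Nat.dist i j) * (normCentralBinom j * normCentralBinom (n - j)) = harmonic n := by
  refine Nat.decreasingInduction (motive := fun i _ => ∑ j ∈ range (n + 1),
    oddHarmonic (Nat.dist i j) * (normCentralBinom j * normCentralBinom (n - j)) = harmonic n)
    (fun i hi ih => ?_) ?_ hi
  · rw [← ih, ← sub_eq_zero, ← sum_sub_distrib]
    calc _ = ∑ j ∈ range (n + 1), -2 * (normCentralBinom j * normCentralBinom (n - j) /
          (2 * ((i : ℝ) - j) + 1)) := by
          refine sum_congr rfl fun j _ => ?_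
          rw [← sub_mul, ← neg_sub, oddHarmonic_dist_succ_left_sub]
          ring
      _ = 0 := by rw [← mul_sum, sum_normCentralBinom_mul_div_eq_zero hi, mul_zero]
  · rw [← sum_normCentralBinom_mul_oddHarmonic, ← sum_range_reflect]
    refine sum_congr rfl fun j hj => ?_
    have hj : j ≤ n := Nat.lt_succ_iff.mp (mem_range.mp hj)
    rw [Nat.add_sub_cancel, Nat.dist_eq_sub_of_le_right (Nat.sub_le n j), Nat.sub_sub_self hj]
    ring

lemma sum_mul_eq_sum_partialSum_mul_sub {R : Type*} [CommRing R] {n : ℕ} (z g : ℕ → R)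
    (hz : ∑ j ∈ range (n + 1), z j = 0) :
    ∑ i ∈ range (n + 1), z i * g i =
      ∑ i ∈ range n, (∑ j ∈ range (i + 1), z j) * (g i - g (i + 1)) := by
  have := sum_range_by_parts g z (n + 1)
  simp only [smul_eq_mul, Nat.add_sub_cancel, hz, mul_zero, zero_sub] at this
  simp only [mul_comm (z _), this, ← sum_neg_distrib]
  exact sum_congr rfl fun i _ => by ring

lemma sum_sq_mul_sum_le_sum_sum_mul {ι : Type*} (s : Finset ι) {B : ι → ι → ℝ}
    (hB : ∀ i j, B i j = B j i) (hoff : ∀ i ∈ s, ∀ j ∈ s, i ≠ j → B i j ≤ 0) (q : ι → ℝ) :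
    ∑ i ∈ s, q i ^ 2 * ∑ j ∈ s, B i j ≤ ∑ i ∈ s, ∑ j ∈ s, q i * q j * B i j := by
  have hswap : ∑ i ∈ s, ∑ j ∈ s, B i j * q j ^ 2 = ∑ i ∈ s, q i ^ 2 * ∑ j ∈ s, B i j := by
    rw [sum_comm]
    refine sum_congr rfl fun i _ => ?_
    rw [mul_sum]
    exact sum_congr rfl fun j _ => by rw [hB]; ring
  have hexpand : ∑ i ∈ s, ∑ j ∈ s, B i j * (q i - q j) ^ 2 =
      2 * ∑ i ∈ s, q i ^ 2 * ∑ j ∈ s, B i j - 2 * ∑ i ∈ s, ∑ j ∈ s, q i * q j * B i j := by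
    have (i j : ι) : B i j * (q i - q j) ^ 2 =
        q i ^ 2 * B i j + B i j * q j ^ 2 - 2 * (q i * q j * B i j) := by ring
    simp only [this, sum_sub_distrib, sum_add_distrib, ← mul_sum, hswap]
    ring
  have hnonpos : ∑ i ∈ s, ∑ j ∈ s, B i j * (q i - q j) ^ 2 ≤ 0 := by
    refine sum_nonpos fun i hi => sum_nonpos fun j hj => ?_
    rcases eq_or_ne i j with rfl | hij
    · simp
    · exact mul_nonpos_of_nonpos_of_nonneg (hoff i hi j hj hij) (sq_nonneg _)
  linarith

/-- Minus the mixed second difference of `(i, j) ↦ oddHarmonic (Nat.dist i j)`, as a function of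
`m = i - j`; it equals `-4 / (4 m² - 1)`. -/
noncomputable def kernelSecondDiff (m : ℝ) : ℝ := 2 / (2 * m + 1) - 2 / (2 * m - 1)

lemma kernelSecondDiff_neg (m : ℝ) : kernelSecondDiff (-m) = kernelSecondDiff m := by
  rw [kernelSecondDiff, kernelSecondDiff, show 2 * -m + 1 = -(2 * m - 1) by ring,
    show 2 * -m - 1 = -(2 * m + 1) by ring, div_neg, div_neg]
  ring

lemma kernelSecondDiff_nonpos {m : ℝ} (hm : 1 ≤ m ^ 2) : kernelSecondDiff m ≤ 0 := by
  have hprod : 0 < (2 * m + 1) * (2 * m - 1) := by nlinarith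
  rw [kernelSecondDiff, div_sub_div _ _ (left_ne_zero_of_mul hprod.ne')
    (right_ne_zero_of_mul hprod.ne')]
  exact div_nonpos_of_nonpos_of_nonneg (by linarith) hprod.le

lemma one_le_sq_natCast_sub {i j : ℕ} (h : i ≠ j) : 1 ≤ ((i : ℝ) - j) ^ 2 := by
  rcases h.lt_or_gt with h | h
  · have : (i : ℝ) + 1 ≤ j := by exact_mod_cast h
    nlinarith
  · have : (j : ℝ) + 1 ≤ i := by exact_mod_cast h
    nlinarith

lemma sum_kernelSecondDiff (i n : ℕ) :
    ∑ j ∈ range n, kernelSecondDiff (i - j) = 2 / (2 * i + 1) - 2 / (2 * ((i : ℝ) - n) + 1) := by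
  have := sum_range_sub' (fun j : ℕ => 2 / (2 * ((i : ℝ) - j) + 1)) n
  rw [Nat.cast_zero, sub_zero] at this
  rw [← this]
  refine sum_congr rfl fun j _ => ?_
  rw [kernelSecondDiff, Nat.cast_succ, show 2 * ((i : ℝ) - (j + 1)) + 1 = 2 * (i - j) - 1 by ring]

lemma sum_kernelSecondDiff_pos {i n : ℕ} (hi : i < n) :
    0 < ∑ j ∈ range n, kernelSecondDiff (i - j) := by
  have : 2 * ((i : ℝ) - n) + 1 < 0 := by
    have : (i : ℝ) + 1 ≤ n := by exact_mod_cast hi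
    linarith
  rw [sum_kernelSecondDiff, sub_pos]
  exact (div_neg_of_pos_of_neg two_pos this).trans (by positivity)

lemma sum_mul_sum_oddHarmonic_dist_mul_eq {n : ℕ} {z : ℕ → ℝ}
    (hz : ∑ j ∈ range (n + 1), z j = 0) :
    ∑ i ∈ range (n + 1), z i * ∑ j ∈ range (n + 1), oddHarmonic (Nat.dist i j) * z j =
      -∑ i ∈ range n, ∑ j ∈ range n, (∑ k ∈ range (i + 1), z k) * (∑ k ∈ range (j + 1), z k) *
        kernelSecondDiff (i - j) := by
  rw [sum_mul_eq_sum_partialSum_mul_sub z _ hz, ← sum_neg_distrib]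
  refine sum_congr rfl fun i _ => ?_
  have hdiff : ∑ j ∈ range (n + 1), oddHarmonic (Nat.dist i j) * z j -
      ∑ j ∈ range (n + 1), oddHarmonic (Nat.dist (i + 1) j) * z j =
      ∑ j ∈ range (n + 1), z j * -(2 / (2 * ((i : ℝ) - j) + 1)) := by
    rw [← sum_sub_distrib]
    refine sum_congr rfl fun j _ => ?_
    rw [← oddHarmonic_dist_succ_left_sub]
    ring
  rw [hdiff, sum_mul_eq_sum_partialSum_mul_sub z _ hz, mul_sum, ← sum_neg_distrib]
  refine sum_congr rfl fun j _ => ?_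
  rw [kernelSecondDiff, Nat.cast_succ, show 2 * ((i : ℝ) - (j + 1)) + 1 = 2 * (i - j) - 1 by ring]
  ring

lemma eq_zero_of_forall_sum_range_eq_zero {n : ℕ} {z : ℕ → ℝ}
    (h : ∀ i ∈ range (n + 1), ∑ k ∈ range (i + 1), z k = 0) : ∀ j ∈ range (n + 1), z j = 0 := by
  intro j hj
  cases j with
  | zero => simpa using h 0 hj
  | succ j =>
    have := h (j + 1) hj
    rwa [sum_range_succ, h j (mem_range.2 (by simp at hj; omega)), zero_add] at this

lemma sum_mul_sum_oddHarmonic_dist_mul_neg {n : ℕ} {z : ℕ → ℝ}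
    (hz : ∑ j ∈ range (n + 1), z j = 0) (hne : ∃ j ∈ range (n + 1), z j ≠ 0) :
    ∑ i ∈ range (n + 1), z i * ∑ j ∈ range (n + 1), oddHarmonic (Nat.dist i j) * z j < 0 := by
  set Z : ℕ → ℝ := fun i => ∑ k ∈ range (i + 1), z k
  have hZ : ∃ i ∈ range n, Z i ≠ 0 := by
    by_contra! h
    obtain ⟨j, hj, hzj⟩ := hne
    refine hzj (eq_zero_of_forall_sum_range_eq_zero (fun i hi => ?_) j hj)
    rcases Nat.lt_succ_iff_lt_or_eq.1 (mem_range.1 hi) with hi | rfl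
    · exact h i (mem_range.2 hi)
    · exact hz
  have hpos : 0 < ∑ i ∈ range n, Z i ^ 2 * ∑ j ∈ range n, kernelSecondDiff (i - j) := by
    obtain ⟨i, hi, hZi⟩ := hZ
    exact sum_pos'
      (fun i hi => mul_nonneg (sq_nonneg _) (sum_kernelSecondDiff_pos (mem_range.1 hi)).le)
      ⟨i, hi, mul_pos (pow_two_pos_of_ne_zero hZi) (sum_kernelSecondDiff_pos (mem_range.1 hi))⟩
  have hle := sum_sq_mul_sum_le_sum_sum_mul (range n) (B := fun i j : ℕ => kernelSecondDiff (i - j))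
    (fun i j => by rw [← neg_sub, kernelSecondDiff_neg])
    (fun i _ j _ hij => kernelSecondDiff_nonpos (one_le_sq_natCast_sub hij)) Z
  rw [sum_mul_sum_oddHarmonic_dist_mul_eq hz]
  linarith

section Matrix

open Matrix

theorem forall_pos_mul_sq_sum_sub_dotProduct_mulVec_iff {ι : Type*} [Fintype ι]
    {K : Matrix ι ι ℝ} (hK : K.IsSymm) {v : ι → ℝ} {h : ℝ} (hv : ∑ i, v i = 1)
    (hKv : K *ᵥ v = fun _ => h) (hneg : ∀ z, z ≠ 0 → ∑ i, z i = 0 → z ⬝ᵥ K *ᵥ z < 0) (c : ℝ) :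
    (∀ x, x ≠ 0 → 0 < c * (∑ i, x i) ^ 2 - x ⬝ᵥ K *ᵥ x) ↔ h < c := by
  have hdot : ∀ x, x ⬝ᵥ K *ᵥ v = h * ∑ i, x i := fun x => by
    simp [hKv, dotProduct, mul_sum, mul_comm]
  have hsymm : ∀ x y, x ⬝ᵥ K *ᵥ y = y ⬝ᵥ K *ᵥ x := fun x y => by
    conv_lhs => rw [← hK]
    exact dotProduct_transpose_mulVec K x y
  have hsum : ∀ (z : ι → ℝ) (S : ℝ), ∑ i, (z + S • v) i = ∑ i, z i + S := fun z S => by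
    simp [sum_add_distrib, ← mul_sum, hv]
  have hquad : ∀ z (S : ℝ), ∑ i, z i = 0 →
      (z + S • v) ⬝ᵥ K *ᵥ (z + S • v) = z ⬝ᵥ K *ᵥ z + h * S ^ 2 := fun z S hz => by
    simp only [mulVec_add, mulVec_smul, add_dotProduct, dotProduct_add, smul_dotProduct,
      dotProduct_smul, hsymm v z, hdot, hsum, hz, smul_eq_mul]
    ring
  constructor
  · intro hpos
    have := hpos v fun hv0 => by simp [hv0] at hv
    rwa [hdot, hv, one_pow, mul_one, mul_one, sub_pos] at this
  · intro hc x hx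
    obtain ⟨z, S, hz, rfl⟩ : ∃ z S, ∑ i, z i = 0 ∧ x = z + S • v :=
      ⟨x - (∑ i, x i) • v, ∑ i, x i, by simp [sum_sub_distrib, ← mul_sum, hv], by simp⟩
    rw [hsum, hz, zero_add, hquad z S hz]
    by_cases hz0 : z = 0
    · have hS : S ≠ 0 := by rintro rfl; simp [hz0] at hx
      have : 0 < (c - h) * S ^ 2 := mul_pos (sub_pos.2 hc) (pow_two_pos_of_ne_zero hS)
      rw [hz0, zero_dotProduct]
      linarith
    · nlinarith [hneg z hz0 hz, sq_nonneg S]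

noncomputable def oddHarmonicKernel (n : ℕ) : Matrix (Fin n) (Fin n) ℝ :=
  of fun i j => oddHarmonic (Nat.dist i j)

lemma oddHarmonicKernel_isSymm (n : ℕ) : (oddHarmonicKernel n).IsSymm :=
  IsSymm.ext fun i j => by simp [oddHarmonicKernel, Nat.dist_comm]

lemma sum_sum_mul_digamma_half_add_abs_sub {n : ℕ} (x : Fin n → ℝ) :
    ∑ i, ∑ j, x i * x j * digamma (1/2 + |(i.1 : ℝ) - (j.1 : ℝ)|) =
      digamma (1/2) * (∑ i, x i) ^ 2 + x ⬝ᵥ oddHarmonicKernel n *ᵥ x := by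
  rw [sq, sum_mul_sum, mul_sum, dotProduct, ← sum_add_distrib]
  refine sum_congr rfl fun i _ => ?_
  rw [mulVec, dotProduct, mul_sum, mul_sum, ← sum_add_distrib]
  refine sum_congr rfl fun j _ => ?_
  rw [digamma_half_add_abs_sub, oddHarmonicKernel, of_apply]
  ring

lemma sum_fin_normCentralBinom_mul (n : ℕ) :
    ∑ j : Fin (n + 1), normCentralBinom j * normCentralBinom (n - j) = 1 := by
  rw [Fin.sum_univ_eq_sum_range (fun j => normCentralBinom j * normCentralBinom (n - j)),
    sum_normCentralBinom_mul]

lemma oddHarmonicKernel_mulVec_normCentralBinom (n : ℕ) :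
    oddHarmonicKernel (n + 1) *ᵥ (fun j => normCentralBinom j * normCentralBinom (n - j)) =
      fun _ => (harmonic n : ℝ) := by
  ext i
  simp only [mulVec, dotProduct, oddHarmonicKernel, of_apply]
  rw [Fin.sum_univ_eq_sum_range
    (fun j => oddHarmonic (Nat.dist i j) * (normCentralBinom j * normCentralBinom (n - j)))]
  exact sum_oddHarmonic_dist_mul_normCentralBinom (Nat.lt_succ_iff.1 i.2)

lemma dotProduct_oddHarmonicKernel_mulVec_neg {n : ℕ} {z : Fin (n + 1) → ℝ} (hz0 : z ≠ 0)
    (hz : ∑ i, z i = 0) : z ⬝ᵥ oddHarmonicKernel (n + 1) *ᵥ z < 0 := by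
  obtain ⟨y, rfl⟩ : ∃ y : ℕ → ℝ, z = fun i : Fin (n + 1) => y i :=
    ⟨fun k => if h : k < n + 1 then z ⟨k, h⟩ else 0, funext fun i => by simp [Fin.is_le]⟩
  have hinner (i : ℕ) : ∑ j : Fin (n + 1), oddHarmonic (Nat.dist i j) * y j =
      ∑ j ∈ range (n + 1), oddHarmonic (Nat.dist i j) * y j :=
    Fin.sum_univ_eq_sum_range (fun j => oddHarmonic (Nat.dist i j) * y j) _
  simp only [mulVec, dotProduct, oddHarmonicKernel, of_apply, hinner]
  rw [Fin.sum_univ_eq_sum_range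
    (fun i => y i * ∑ j ∈ range (n + 1), oddHarmonic (Nat.dist i j) * y j)]
  refine sum_mul_sum_oddHarmonic_dist_mul_neg ?_ ?_
  · rwa [← Fin.sum_univ_eq_sum_range]
  · by_contra! h
    exact hz0 (funext fun i => h i (mem_range.2 i.2))

end Matrix

theorem stmt_16 (n : ℕ) (t : ℝ) :
    (∀ x : Fin (n + 1) → ℝ, x ≠ 0 →
        0 < t * (∑ i, x i) ^ 2 -
          ∑ i, ∑ j, x i * x j * digamma (1/2 + |(i.1 : ℝ) - (j.1 : ℝ)|)) ↔
      digamma (1/2) + ∑ k ∈ Finset.range n, (1 : ℝ) / (k + 1) < t := by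
  have hharmonic : ∑ k ∈ range n, (1 : ℝ) / (k + 1) = harmonic n := by simp [harmonic]
  simp only [sum_sum_mul_digamma_half_add_abs_sub, hharmonic, ← lt_sub_iff_add_lt']
  convert forall_pos_mul_sq_sum_sub_dotProduct_mulVec_iff (oddHarmonicKernel_isSymm _)
    (sum_fin_normCentralBinom_mul n) (oddHarmonicKernel_mulVec_normCentralBinom n)
    (fun _ => dotProduct_oddHarmonicKernel_mulVec_neg) (t - digamma (1/2)) using 4
  ring
end
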